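/- arXiv:1207.3597 — 6 statements merged into one kernel-verified Lean document; each statement's English description precedes it below -/
import Mathlib

section
/- For all Petri nets N1 and N2 labelled over Actτ: if N1 and N2 are branching ST-bisimilar with explicit divergence, then N1 and N2 are step readiness equivalent. -/
open scoped Classical

/-- A labelled Petri net over the set `A` of visible actions (a transition labelled
`none` is a τ-(internal) transition), with places drawn from the universe `P` and
transitions drawn from the universe `Tr`.  `pre t p` is the arc weight `F(p,t)` and
`post t p` is the arc weight `F(t,p)`. -/
structure PNet (P Tr A : Type) where
  places : Set P
  trans : Set Tr
  pre : Tr → P → ℕ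
  post : Tr → P → ℕ
  M0 : P → ℕ
  l : Tr → Option A
  pre_wf : ∀ t p, pre t p ≠ 0 → t ∈ trans ∧ p ∈ places
  post_wf : ∀ t p, post t p ≠ 0 → t ∈ trans ∧ p ∈ places
  M0_wf : ∀ p, M0 p ≠ 0 → p ∈ places

namespace PNet

variable {P Tr A : Type}

/-- `•G`, for a finite multiset `G` of transitions. -/
def preStep (N : PNet P Tr A) (G : Tr →₀ ℕ) : P → ℕ :=
  fun p => G.sum fun t n => n * N.pre t p

/-- `G•`, for a finite multiset `G` of transitions. -/
def postStep (N : PNet P Tr A) (G : Tr →₀ ℕ) : P → ℕ :=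
  fun p => G.sum fun t n => n * N.post t p

/-- `M [G⟩ M'` : the (nonempty, finite) multiset `G` of transitions is a step from
`M` to `M'`. -/
def IsStep (N : PNet P Tr A) (M : P → ℕ) (G : Tr →₀ ℕ) (M' : P → ℕ) : Prop :=
  G ≠ 0 ∧ ↑G.support ⊆ N.trans ∧ (∀ p, N.preStep G p ≤ M p) ∧
    ∀ p, M' p = M p - N.preStep G p + N.postStep G p

/-- `[M0⟩` : the set of reachable markings. -/
inductive Reachable (N : PNet P Tr A) : (P → ℕ) → Prop
  | refl : Reachable N N.M0
  | step {M G M'} : Reachable N M → N.IsStep M G M' → Reachable N M'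

/-- The transition `t` is enabled under the marking `M`. -/
def enabled (N : PNet P Tr A) (M : P → ℕ) (t : Tr) : Prop :=
  t ∈ N.trans ∧ ∀ p, N.pre t p ≤ M p

/-- The concurrency relation `t ⌣ u`. -/
def Conc (N : PNet P Tr A) (t u : Tr) : Prop :=
  t ∈ N.trans ∧ u ∈ N.trans ∧ ∃ M, N.Reachable M ∧ ∀ p, N.pre t p + N.pre u p ≤ M p

/-- Firing of a single transition: `M [\{t\}⟩ M'`. -/
def fire (N : PNet P Tr A) (M : P → ℕ) (t : Tr) (M' : P → ℕ) : Prop :=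
  N.enabled M t ∧ ∀ p, M' p = M p - N.pre t p + N.post t p

/-- `M —τ→ M'`. -/
def tauFire (N : PNet P Tr A) (M M' : P → ℕ) : Prop :=
  ∃ t, N.l t = none ∧ N.fire M t M'

/-- `M —a→ M'` for a visible action `a`. -/
def visFire (N : PNet P Tr A) (a : A) (M M' : P → ℕ) : Prop :=
  ∃ t, N.l t = some a ∧ N.fire M t M'

/-- `M ⟹ M'` : the reflexive-transitive closure of `—τ→`. -/
def Taus (N : PNet P Tr A) : (P → ℕ) → (P → ℕ) → Prop :=
  Relation.ReflTransGen N.tauFire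

/-- `M ⟹σ⟹ M'` for a sequence `σ` of visible actions. -/
def seqReach (N : PNet P Tr A) : List A → (P → ℕ) → (P → ℕ) → Prop
  | [], M, M' => N.Taus M M'
  | a :: σ, M, M'' => ∃ M1 M2, N.Taus M M1 ∧ N.visFire a M1 M2 ∧ N.seqReach σ M2 M''

/-- `ℓ(G)(a)` : the number of occurrences of the visible action `a` in the finite
multiset `G` of transitions. -/
noncomputable def labCount (N : PNet P Tr A) (G : Tr →₀ ℕ) (a : A) : ℕ :=
  ∑ t ∈ G.support, if N.l t = some a then G t else 0

/-- `ℓ(G)(a)` for a finite signed multiset `G` of transitions. -/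
noncomputable def labCountZ (N : PNet P Tr A) (G : Tr →₀ ℤ) (a : A) : ℤ :=
  ∑ t ∈ G.support, if N.l t = some a then G t else 0

/-- `ℓ(G) ≡ ∅` : the signed multiset `G` contains no visible actions. -/
def SilentZ (N : PNet P Tr A) (G : Tr →₀ ℤ) : Prop := ∀ a, N.labCountZ G a = 0

/-- The token replacement `⟦G⟧ = G• − •G` of a finite signed multiset of transitions. -/
noncomputable def tok (N : PNet P Tr A) (G : Tr →₀ ℤ) : P → ℤ :=
  fun p => ∑ t ∈ G.support, G t * ((N.post t p : ℤ) - (N.pre t p : ℤ))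

/-- The token replacement `⟦G⟧ = G• − •G` of a finite multiset of transitions. -/
noncomputable def tokN (N : PNet P Tr A) (G : Tr →₀ ℕ) : P → ℤ :=
  fun p => ∑ t ∈ G.support, (G t : ℤ) * ((N.post t p : ℤ) - (N.pre t p : ℤ))

/-- `M —X→` : a step with multiset of visible labels `X ∈ ℕ^Act` is enabled in `M`. -/
def stepTo (N : PNet P Tr A) (M : P → ℕ) (X : A → ℕ) : Prop :=
  ∃ G : Tr →₀ ℕ, G ≠ 0 ∧ ↑G.support ⊆ N.trans ∧ (∀ t ∈ G.support, N.l t ≠ none) ∧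
    (∀ p, N.preStep G p ≤ M p) ∧ ∀ a, N.labCount G a = X a

/-- `⟨σ, X⟩` is a step ready pair of `N`. -/
def StepReadyPair (N : PNet P Tr A) (σ : List A) (X : Set (A → ℕ)) : Prop :=
  ∃ M, N.seqReach σ N.M0 M ∧ (∀ M', ¬ N.tauFire M M') ∧ X = {Y | N.stepTo M Y}

/-- A net is plain iff its labelling is injective and no transition is labelled τ. -/
def Plain (N : PNet P Tr A) : Prop :=
  (∀ t ∈ N.trans, N.l t ≠ none) ∧
    ∀ t ∈ N.trans, ∀ u ∈ N.trans, N.l t = N.l u → t = u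

/-- A structural conflict net: concurrent transitions have no common preplace. -/
def StructuralConflict (N : PNet P Tr A) : Prop :=
  ∀ t u, N.Conc t u → ∀ p, N.pre t p = 0 ∨ N.pre u p = 0

/-- A finitary net: every transition has a preplace, and every reachable marking is
finite and enables only finitely many transitions. -/
def Finitary (N : PNet P Tr A) : Prop :=
  (∀ t ∈ N.trans, ∃ p, N.pre t p ≠ 0) ∧
    ∀ M, N.Reachable M → {p | M p ≠ 0}.Finite ∧ {t | N.enabled M t}.Finite

/-- `N` has a fully reachable pure M. -/
def FullyReachablePureM (N : PNet P Tr A) : Prop :=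
  ∃ t u v : Tr, t ∈ N.trans ∧ u ∈ N.trans ∧ v ∈ N.trans ∧
    (∃ p, N.pre t p ≠ 0 ∧ N.pre u p ≠ 0) ∧
    (∃ p, N.pre u p ≠ 0 ∧ N.pre v p ≠ 0) ∧
    (∀ p, N.pre t p = 0 ∨ N.pre v p = 0) ∧
    ∃ M, N.Reachable M ∧ ∀ p, max (max (N.pre t p) (N.pre u p)) (N.pre v p) ≤ M p

/-- `N` is distributed w.r.t. the distribution `D`. -/
def DistributedWrt (N : PNet P Tr A) {Loc : Type} (D : P ⊕ Tr → Loc) : Prop :=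
  (∀ t p, N.pre t p ≠ 0 → D (Sum.inr t) = D (Sum.inl p)) ∧
    ∀ t u, N.Conc t u → D (Sum.inr t) ≠ D (Sum.inr u)

/-- `N` is a distributed net. -/
def Distributed (N : PNet P Tr A) : Prop :=
  ∃ (Loc : Type) (D : P ⊕ Tr → Loc), N.DistributedWrt D

/-- `N` is essentially distributed w.r.t. the distribution `D`. -/
def EssentiallyDistributedWrt (N : PNet P Tr A) {Loc : Type} (D : P ⊕ Tr → Loc) : Prop :=
  (∀ t p, N.pre t p ≠ 0 → D (Sum.inr t) = D (Sum.inl p)) ∧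
    ∀ t u, N.Conc t u → N.l t ≠ none → D (Sum.inr t) ≠ D (Sum.inr u)

def EssentiallyDistributed (N : PNet P Tr A) : Prop :=
  ∃ (Loc : Type) (D : P ⊕ Tr → Loc), N.EssentiallyDistributedWrt D

/-- `N` is externally distributed w.r.t. the distribution `D`. -/
def ExternallyDistributedWrt (N : PNet P Tr A) {Loc : Type} (D : P ⊕ Tr → Loc) : Prop :=
  (∀ t p, N.pre t p ≠ 0 → D (Sum.inr t) = D (Sum.inl p)) ∧
    ∀ t u, N.Conc t u → N.l t ≠ none → N.l u ≠ none → D (Sum.inr t) ≠ D (Sum.inr u)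

def ExternallyDistributed (N : PNet P Tr A) : Prop :=
  ∃ (Loc : Type) (D : P ⊕ Tr → Loc), N.ExternallyDistributedWrt D

/-- The generating relation of the canonical co-location relation: a transition is
co-located with each of its preplaces. -/
def canonGen (N : PNet P Tr A) : (P ⊕ Tr) → (P ⊕ Tr) → Prop :=
  fun x y => ∃ t p, x = Sum.inr t ∧ y = Sum.inl p ∧ N.pre t p ≠ 0

/-- The canonical co-location relation `≡_C`. -/
def canonRel (N : PNet P Tr A) : (P ⊕ Tr) → (P ⊕ Tr) → Prop :=
  Relation.EqvGen N.canonGen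

/-- The canonical distribution, mapping every net element to its `≡_C`-class. -/
def canonDist (N : PNet P Tr A) : (P ⊕ Tr) → Quot N.canonRel := Quot.mk _

/-- The flow relation `F` on `S ∪ T`. -/
def flow (N : PNet P Tr A) : P ⊕ Tr → P ⊕ Tr → ℕ
  | Sum.inl p, Sum.inr t => N.pre t p
  | Sum.inr t, Sum.inl p => N.post t p
  | _, _ => 0

/-- `F ↾ (S ∪ T⁺)` is acyclic. -/
def AcyclicOn (N : PNet P Tr A) (Tp : Set Tr) : Prop :=
  ∀ x : P ⊕ Tr, ¬ Relation.TransGen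
    (fun x y => N.flow x y ≠ 0 ∧ (∀ t, x = Sum.inr t → t ∈ Tp) ∧
      (∀ t, y = Sum.inr t → t ∈ Tp)) x x

/-- A path in `N`, as a nonempty alternating list of net elements. -/
def IsPathList (N : PNet P Tr A) (π : List (P ⊕ Tr)) : Prop :=
  π ≠ [] ∧ π.Chain' fun x y => N.flow x y ≠ 0

/-- The arc weight `F(π)` of a path `π`. -/
def pathWeight (N : PNet P Tr A) (π : List (P ⊕ Tr)) : ℕ :=
  ((π.zip π.tail).map fun q => N.flow q.1 q.2).prod

/-- A faithful place w.r.t. `T⁺` and `S⁺`, i.e. `|{s} ∩ S⁺| + ∑_{t ∈ T⁺} F(t,s) = 1`. -/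
def FaithfulPlace (N : PNet P Tr A) (Tp : Set Tr) (Sp : Set P) (s : P) : Prop :=
  (s ∈ Sp ∧ ∀ t ∈ Tp, N.post t s = 0) ∨
    (s ∉ Sp ∧ ∃ t ∈ Tp, N.post t s = 1 ∧ ∀ u ∈ Tp, u ≠ t → N.post u s = 0)

/-- A faithful path w.r.t. `T⁺` and `S⁺`: all nodes but the last are transitions
in `T⁺` or faithful places. -/
def FaithfulPath (N : PNet P Tr A) (Tp : Set Tr) (Sp : Set P) (π : List (P ⊕ Tr)) : Prop :=
  N.IsPathList π ∧ ∀ x ∈ π.dropLast,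
    (∃ t ∈ Tp, x = Sum.inr t) ∨ ∃ s, x = Sum.inl s ∧ N.FaithfulPlace Tp Sp s

/-- The multiset `*x` of faithful origins of a net element `x`, w.r.t. `T⁺` and `S⁺`. -/
noncomputable def faithOrig (N : PNet P Tr A) (Tp : Set Tr) (Sp : Set P) (x : P ⊕ Tr) :
    P → ℕ∞ :=
  fun s => sSup {w : ℕ∞ | ∃ π : List (P ⊕ Tr), s ∈ Sp ∧ N.FaithfulPath Tp Sp π ∧
    π.head? = some (Sum.inl s) ∧ π.getLast? = some x ∧ w = (N.pathWeight π : ℕ∞)}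

end PNet

/-- A labelled transition system over visible labels `L` (the invisible action τ is
represented by `none`). -/
structure LTS (St L : Type) where
  init : St
  tr : St → Option L → St → Prop

namespace LTS

variable {St L : Type}

/-- `⟹` : the reflexive-transitive closure of `—τ→`. -/
def Taus (Lt : LTS St L) : St → St → Prop :=
  Relation.ReflTransGen fun s s' => Lt.tr s none s'

/-- `s —(η)→ s'` : an `η`-transition that may stay put when `η = τ`. -/
def OptTr (Lt : LTS St L) (s : St) (η : Option L) (s' : St) : Prop :=
  Lt.tr s η s' ∨ (η = none ∧ s = s')

/-- The state `s` admits an infinite sequence of τ-transitions. -/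
def Diverges (Lt : LTS St L) (s : St) : Prop :=
  ∃ f : ℕ → St, f 0 = s ∧ ∀ n, Lt.tr (f n) none (f (n + 1))

def ReachableState (Lt : LTS St L) (s : St) : Prop :=
  Relation.ReflTransGen (fun x y => ∃ η, Lt.tr x η y) Lt.init s

/-- A deterministic LTS: no reachable state admits a τ-transition, and visible
transitions from reachable states are deterministic. -/
def Deterministic (Lt : LTS St L) : Prop :=
  ∀ s, Lt.ReachableState s →
    (∀ s', ¬ Lt.tr s none s') ∧
      ∀ a s' s'', Lt.tr s (some a) s' → Lt.tr s (some a) s'' → s' = s''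

end LTS

/-- `B` is a branching bisimulation between the two LTSs. -/
def IsBranchingBisim {St1 St2 L : Type} (L1 : LTS St1 L) (L2 : LTS St2 L)
    (B : St1 → St2 → Prop) : Prop :=
  B L1.init L2.init ∧
    (∀ s1 s2 η s1', B s1 s2 → L1.tr s1 η s1' →
      ∃ s2d s2', L2.Taus s2 s2d ∧ L2.OptTr s2d η s2' ∧ B s1 s2d ∧ B s1' s2') ∧
    ∀ s1 s2 η s2', B s1 s2 → L2.tr s2 η s2' →
      ∃ s1d s1', L1.Taus s1 s1d ∧ L1.OptTr s1d η s1' ∧ B s1d s2 ∧ B s1' s2'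

/-- The two LTSs are branching bisimilar. -/
def BranchingBisimilar {St1 St2 L : Type} (L1 : LTS St1 L) (L2 : LTS St2 L) : Prop :=
  ∃ B, IsBranchingBisim L1 L2 B

/-- The two LTSs are branching bisimilar with explicit divergence. -/
def BranchingBisimilarED {St1 St2 L : Type} (L1 : LTS St1 L) (L2 : LTS St2 L) : Prop :=
  ∃ B, IsBranchingBisim L1 L2 B ∧
    ∀ s1 s2, B s1 s2 → (L1.Diverges s1 ↔ L2.Diverges s2)

/-- The visible action phases `a⁺` and `a⁻ⁿ` (here `n` is the 0-based position of the
terminating transition in the sequence of transitions currently firing). -/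
inductive STLabel (A : Type) : Type
  | plus (a : A)
  | minus (a : A) (n : ℕ)

/-- The visible action phases `a⁺` and `a⁻` of split semantics. -/
inductive SplitLabel (A : Type) : Type
  | plus (a : A)
  | minus (a : A)

/-- The map `η ↦ η‾` from ST-action phases to split action phases. -/
def STLabel.bar {A : Type} : STLabel A → SplitLabel A
  | .plus a => .plus a
  | .minus a _ => .minus a

namespace PNet

variable {P Tr A : Type}

/-- The ST-transition relations between ST-markings. -/
def stTr (N : PNet P Tr A) :
    ((P → ℕ) × List Tr) → Option (STLabel A) → ((P → ℕ) × List Tr) → Prop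
  | s, some (STLabel.plus a), s' => ∃ t, N.l t = some a ∧ N.enabled s.1 t ∧
      (∀ p, s'.1 p = s.1 p - N.pre t p) ∧ s'.2 = s.2 ++ [t]
  | s, some (STLabel.minus a n), s' => ∃ t, s.2[n]? = some t ∧ N.l t = some a ∧
      s'.2 = s.2.eraseIdx n ∧ ∀ p, s'.1 p = s.1 p + N.post t p
  | s, none, s' => ∃ t, N.l t = none ∧ N.fire s.1 t s'.1 ∧ s'.2 = s.2

/-- The ST-LTS associated to a net. -/
def stLTS (N : PNet P Tr A) : LTS ((P → ℕ) × List Tr) (STLabel A) :=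
  ⟨(N.M0, []), N.stTr⟩

/-- The split transition relations between split markings. -/
def splitTr (N : PNet P Tr A) :
    ((P → ℕ) × Multiset Tr) → Option (SplitLabel A) → ((P → ℕ) × Multiset Tr) → Prop
  | s, some (SplitLabel.plus a), s' => ∃ t, N.l t = some a ∧ N.enabled s.1 t ∧
      (∀ p, s'.1 p = s.1 p - N.pre t p) ∧ s'.2 = s.2 + {t}
  | s, some (SplitLabel.minus a), s' => ∃ t, N.l t = some a ∧ s.2 = s'.2 + {t} ∧
      ∀ p, s'.1 p = s.1 p + N.post t p
  | s, none, s' => ∃ t, N.l t = none ∧ N.fire s.1 t s'.1 ∧ s'.2 = s.2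

/-- The split LTS associated to a net. -/
def splitLTS (N : PNet P Tr A) : LTS ((P → ℕ) × Multiset Tr) (SplitLabel A) :=
  ⟨(N.M0, 0), N.splitTr⟩

end PNet

/-- `N1 ≈Δ_bSTb N2` : branching ST-bisimilarity with explicit divergence. -/
def BranchingSTBisimilarED {P1 T1 P2 T2 A : Type}
    (N1 : PNet P1 T1 A) (N2 : PNet P2 T2 A) : Prop :=
  BranchingBisimilarED N1.stLTS N2.stLTS

/-- `N1 ≈R N2` : step readiness equivalence. -/
def StepReadinessEquiv {P1 T1 P2 T2 A : Type}
    (N1 : PNet P1 T1 A) (N2 : PNet P2 T2 A) : Prop :=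
  ∀ σ X, N1.StepReadyPair σ X ↔ N2.StepReadyPair σ X

/-- A component with interface `(I, O)`. -/
structure NetComponent (P Tr A : Type) where
  net : PNet P Tr A
  I : Set P
  O : Set P
  I_sub : I ⊆ net.places
  O_sub : O ⊆ net.places
  disjIO : Disjoint I O
  O_noPost : ∀ p ∈ O, ∀ t, net.pre t p = 0

/-- A sequential component with interface: some set `Q` of private places carries
exactly one token initially, and every transition consumes and produces exactly one
token in `Q`. -/
def NetComponent.Sequential {P Tr A : Type} (C : NetComponent P Tr A) : Prop :=
  ∃ Q : Set P, Q ⊆ C.net.places \ (C.I ∪ C.O) ∧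
    (∀ t ∈ C.net.trans,
      (∃ q ∈ Q, C.net.pre t q = 1 ∧ ∀ q' ∈ Q, q' ≠ q → C.net.pre t q' = 0) ∧
        ∃ q ∈ Q, C.net.post t q = 1 ∧ ∀ q' ∈ Q, q' ≠ q → C.net.post t q' = 0) ∧
    ∃ q ∈ Q, C.net.M0 q = 1 ∧ ∀ q' ∈ Q, q' ≠ q → C.net.M0 q' = 0

/-- The components of the family `C` are pairwise composable: disjoint except for
shared interface places, and with pairwise disjoint sets of input places. -/
def Composable {K P Tr A : Type} (C : K → NetComponent P Tr A) : Prop :=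
  (∀ k l, k ≠ l → Disjoint (C k).net.trans (C l).net.trans) ∧
    (∀ k l, k ≠ l →
      (C k).net.places ∩ (C l).net.places =
        ((C k).I ∪ (C k).O) ∩ ((C l).I ∪ (C l).O)) ∧
    ∀ k l, k ≠ l → Disjoint (C k).I (C l).I

/-- `D = ‖_{k ∈ K} C k` : `D` is the asynchronous parallel composition of the
family `C` of components. -/
structure IsParComp {K P Tr A : Type} (C : K → NetComponent P Tr A)
    (D : NetComponent P Tr A) : Prop where
  places_eq : D.net.places = ⋃ k, (C k).net.places
  trans_eq : D.net.trans = ⋃ k, (C k).net.trans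
  pre_eq : ∀ k, ∀ t ∈ (C k).net.trans, ∀ p, D.net.pre t p = (C k).net.pre t p
  post_eq : ∀ k, ∀ t ∈ (C k).net.trans, ∀ p, D.net.post t p = (C k).net.post t p
  M0_eq : ∀ p, D.net.M0 p = finsum fun k => (C k).net.M0 p
  l_eq : ∀ k, ∀ t ∈ (C k).net.trans, D.net.l t = (C k).net.l t
  I_eq : D.I = ⋃ k, (C k).I
  O_eq : D.O = (⋃ k, (C k).O) \ ⋃ k, (C k).I

/-- An LSGA net: an asynchronous parallel composition of sequential components
with interface. -/
def IsLSGA {P Tr A : Type} (N : PNet P Tr A) : Prop :=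
  ∃ (K : Type) (C : K → NetComponent P Tr A) (D : NetComponent P Tr A),
    Composable C ∧ (∀ k, (C k).Sequential) ∧ IsParComp C D ∧ D.net = N

/-!
A branching ST-bisimulation matches a τ-move by τ-moves, and a visible firing, split into its
phases a⁺ and a⁻, by the same two phases each behind a τ-path; so every weak trace σ of N₁
ending in (M, ε) is matched by σ in N₂ ending in a related (M₂, ε). If M is stable, (M, ε)
does not diverge; by explicit divergence neither does (M₂, ε), which therefore τ-reaches a
stable M₂' still related to (M, ε). Between stable related states each a⁺ is matched without
τ-moves, and removing tokens keeps a marking stable, so starting the transitions of a step of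
M one at a time yields a step of M₂' with the same visible labels.
-/

namespace LTS

variable {St L : Type} {Lt : LTS St L}

def Stable (Lt : LTS St L) (s : St) : Prop := ∀ s', ¬ Lt.tr s none s'

theorem Stable.taus_eq {s s' : St} (hs : Lt.Stable s) (h : Lt.Taus s s') : s' = s := by
  rcases h.cases_head with h | ⟨c, hc, -⟩
  · exact h.symm
  · exact absurd hc (hs c)

theorem Stable.not_diverges {s : St} (hs : Lt.Stable s) : ¬ Lt.Diverges s := by
  rintro ⟨f, rfl, hf⟩
  exact hs _ (hf 0)

theorem exists_taus_stable_of_not_diverges {s : St} (h : ¬ Lt.Diverges s) :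
    ∃ s', Lt.Taus s s' ∧ Lt.Stable s' := by
  have hacc : Acc (fun x y => Lt.tr y none x) s :=
    not_not.1 fun hn => h (not_acc_iff_exists_descending_chain.1 hn)
  clear h
  induction hacc with
  | intro s _ ih =>
    by_cases hs : Lt.Stable s
    · exact ⟨s, .refl, hs⟩
    · obtain ⟨s', hs'⟩ := not_forall_not.1 hs
      obtain ⟨s'', hT, hstable⟩ := ih s' hs'
      exact ⟨s'', .head hs' hT, hstable⟩

end LTS

namespace IsBranchingBisim

variable {St1 St2 L : Type} {L1 : LTS St1 L} {L2 : LTS St2 L} {B : St1 → St2 → Prop}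
  {s1 s1' : St1} {s2 s2' : St2}

theorem symm (hB : IsBranchingBisim L1 L2 B) : IsBranchingBisim L2 L1 (flip B) :=
  ⟨hB.1, fun _ _ _ _ hrel htr => hB.2.2 _ _ _ _ hrel htr,
    fun _ _ _ _ hrel htr => hB.2.1 _ _ _ _ hrel htr⟩

theorem exists_taus (hB : IsBranchingBisim L1 L2 B) (hrel : B s1 s2) (h : L1.Taus s1 s1') :
    ∃ s2', L2.Taus s2 s2' ∧ B s1' s2' := by
  induction h with
  | refl => exact ⟨s2, .refl, hrel⟩
  | tail _ hτ ih =>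
    obtain ⟨s2a, hT, hrela⟩ := ih
    obtain ⟨s2d, s2', hT', hopt, -, hrel'⟩ := hB.2.1 _ _ _ _ hrela hτ
    refine ⟨s2', (hT.trans hT').trans ?_, hrel'⟩
    rcases hopt with hτ' | ⟨-, rfl⟩
    exacts [.single hτ', .refl]

theorem exists_weak_tr (hB : IsBranchingBisim L1 L2 B) {α : L} (hrel : B s1 s2)
    (h : L1.tr s1 (some α) s1') :
    ∃ s2d s2', L2.Taus s2 s2d ∧ L2.tr s2d (some α) s2' ∧ B s1' s2' := by
  obtain ⟨s2d, s2', hT, hopt, -, hrel'⟩ := hB.2.1 _ _ _ _ hrel h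
  rcases hopt with h' | ⟨h', -⟩
  · exact ⟨s2d, s2', hT, h', hrel'⟩
  · exact absurd h' (Option.some_ne_none α)

theorem exists_tr_of_stable (hB : IsBranchingBisim L1 L2 B) {α : L} (hrel : B s1 s2)
    (hs2 : L2.Stable s2) (h : L1.tr s1 (some α) s1') :
    ∃ s2', L2.tr s2 (some α) s2' ∧ B s1' s2' := by
  obtain ⟨s2d, s2', hT, h', hrel'⟩ := hB.exists_weak_tr hrel h
  rw [hs2.taus_eq hT] at h'
  exact ⟨s2', h', hrel'⟩

theorem rel_of_taus_of_stable (hB : IsBranchingBisim L1 L2 B) (hs1 : L1.Stable s1)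
    (hrel : B s1 s2) (h : L2.Taus s2 s2') : B s1 s2' := by
  induction h with
  | refl => exact hrel
  | tail _ hτ ih =>
    obtain ⟨s1d, s1', hT, hopt, -, hrel'⟩ := hB.2.2 _ _ _ _ ih hτ
    rw [hs1.taus_eq hT] at hopt
    rcases hopt with hτ' | ⟨-, rfl⟩
    · exact absurd hτ' (hs1 _)
    · exact hrel'

theorem exists_stable_of_stable (hB : IsBranchingBisim L1 L2 B)
    (hED : ∀ s1 s2, B s1 s2 → L2.Diverges s2 → L1.Diverges s1) (hs1 : L1.Stable s1)
    (hrel : B s1 s2) : ∃ s2', L2.Taus s2 s2' ∧ L2.Stable s2' ∧ B s1 s2' := by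
  obtain ⟨s2', hT, hs2'⟩ :=
    LTS.exists_taus_stable_of_not_diverges fun h => hs1.not_diverges (hED s1 s2 hrel h)
  exact ⟨s2', hT, hs2', hB.rel_of_taus_of_stable hs1 hrel hT⟩

end IsBranchingBisim

namespace PNet

variable {P Tr A : Type} {N : PNet P Tr A}

def Stable (N : PNet P Tr A) (M : P → ℕ) : Prop := ∀ M', ¬ N.tauFire M M'

theorem Stable.anti {M M' : P → ℕ} (hle : M' ≤ M) (h : N.Stable M) : N.Stable M' := by
  rintro _ ⟨t, hl, ⟨ht, hpre⟩, -⟩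
  exact h _ ⟨t, hl, ⟨ht, fun p => (hpre p).trans (hle p)⟩, fun _ => rfl⟩

theorem stable_stLTS_iff {M : P → ℕ} {C : List Tr} : N.stLTS.Stable (M, C) ↔ N.Stable M := by
  constructor
  · rintro h M' ⟨t, hl, hf⟩
    exact h (M', C) ⟨t, hl, hf, rfl⟩
  · rintro h s' ⟨t, hl, hf, -⟩
    exact h s'.1 ⟨t, hl, hf⟩

theorem stLTS_taus_iff {M M' : P → ℕ} {C C' : List Tr} :
    N.stLTS.Taus (M, C) (M', C') ↔ C' = C ∧ N.Taus M M' := by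
  constructor
  · suffices ∀ s', N.stLTS.Taus (M, C) s' → s'.2 = C ∧ N.Taus M s'.1 from this _
    intro s' h
    induction h with
    | refl => exact ⟨rfl, .refl⟩
    | tail _ hτ ih =>
      obtain ⟨t, hl, hf, hC⟩ := hτ
      exact ⟨hC.trans ih.1, ih.2.tail ⟨t, hl, hf⟩⟩
  · rintro ⟨rfl, h⟩
    induction h with
    | refl => exact .refl
    | tail _ hτ ih =>
      obtain ⟨t, hl, hf⟩ := hτ
      exact ih.tail ⟨t, hl, hf, rfl⟩

theorem Taus.add_right {M M' : P → ℕ} (h : N.Taus M M') (K : P → ℕ) :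
    N.Taus (M + K) (M' + K) := by
  induction h with
  | refl => exact .refl
  | tail _ hτ ih =>
    obtain ⟨t, hl, ⟨ht, hpre⟩, hM⟩ := hτ
    refine ih.tail ⟨t, hl, ⟨ht, fun p => (hpre p).trans (Nat.le_add_right _ _)⟩, fun p => ?_⟩
    have := hpre p
    simp only [Pi.add_apply, hM p]
    omega

theorem Taus.trans_seqReach {σ : List A} {M M' M'' : P → ℕ} (h : N.Taus M M')
    (h' : N.seqReach σ M' M'') : N.seqReach σ M M'' := by
  cases σ with
  | nil => exact h.trans h'
  | cons a σ =>
    obtain ⟨M1, M2, hT, hvis, hseq⟩ := h'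
    exact ⟨M1, M2, h.trans hT, hvis, hseq⟩

theorem seqReach.trans_taus {σ : List A} {M M' M'' : P → ℕ} (h : N.seqReach σ M M')
    (h' : N.Taus M' M'') : N.seqReach σ M M'' := by
  induction σ generalizing M with
  | nil => exact Relation.ReflTransGen.trans h h'
  | cons a σ ih =>
    obtain ⟨M1, M2, hT, hvis, hseq⟩ := h
    exact ⟨M1, M2, hT, hvis, ih hseq⟩

theorem exists_stTr_plus_minus_of_visFire {a : A} {M M' : P → ℕ} (h : N.visFire a M M') :
    ∃ s, N.stLTS.tr (M, []) (some (.plus a)) s ∧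
      N.stLTS.tr s (some (.minus a 0)) (M', []) := by
  obtain ⟨t, hl, hen, hM'⟩ := h
  exact ⟨(fun p => M p - N.pre t p, [t]), ⟨t, hl, hen, fun _ => rfl, rfl⟩,
    ⟨t, rfl, hl, rfl, hM'⟩⟩

theorem visFire_taus_of_stTr_plus_minus {a : A} {M M1 M2 M3 : P → ℕ} {C1 C2 C3 : List Tr}
    (h1 : N.stLTS.tr (M, []) (some (.plus a)) (M1, C1)) (hT : N.stLTS.Taus (M1, C1) (M2, C2))
    (h2 : N.stLTS.tr (M2, C2) (some (.minus a 0)) (M3, C3)) :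
    C3 = [] ∧ ∃ M', N.visFire a M M' ∧ N.Taus M' M3 := by
  obtain ⟨t, hl, hen, hM1, rfl⟩ := h1
  obtain ⟨rfl, hT'⟩ := stLTS_taus_iff.1 hT
  obtain ⟨u, hu, -, rfl, hM3⟩ := h2
  obtain rfl : t = u := by simpa using hu
  refine ⟨rfl, M1 + N.post t, ⟨t, hl, hen, fun p => congrArg (· + N.post t p) (hM1 p)⟩, ?_⟩
  convert hT'.add_right (N.post t)
  exact funext hM3

theorem preStep_eq_sum_map (G : Tr →₀ ℕ) (p : P) :
    N.preStep G p = ((Finsupp.toMultiset G).map (N.pre · p)).sum := by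
  induction G using Finsupp.induction_linear with
  | zero => simp [preStep]
  | add f g hf hg =>
    rw [map_add, Multiset.map_add, Multiset.sum_add, ← hf, ← hg]
    exact Finsupp.sum_add_index' (fun _ => zero_mul _) fun _ _ _ => add_mul _ _ _
  | single t n => simp [preStep, Multiset.map_nsmul, Multiset.sum_nsmul]

theorem labCount_eq_count_map (G : Tr →₀ ℕ) (a : A) :
    N.labCount G a = ((Finsupp.toMultiset G).map N.l).count (some a) := by
  rw [Finsupp.toMultiset_map, Finsupp.count_toMultiset]
  simp [labCount, Finsupp.mapDomain, Finsupp.single_apply, Finsupp.sum]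

theorem stepTo_iff_exists_multiset {M : P → ℕ} {X : A → ℕ} :
    N.stepTo M X ↔ ∃ S : Multiset Tr, S ≠ 0 ∧ (∀ t ∈ S, t ∈ N.trans ∧ N.l t ≠ none) ∧
      (∀ p, (S.map (N.pre · p)).sum ≤ M p) ∧ ∀ a, (S.map N.l).count (some a) = X a := by
  have hsurj : Function.Surjective (Finsupp.toMultiset (α := Tr)) :=
    fun S => ⟨_, Multiset.toFinsupp_toMultiset S⟩
  rw [stepTo, hsurj.exists]
  refine exists_congr fun G => ?_
  simp [preStep_eq_sum_map, labCount_eq_count_map, Set.subset_def, forall_and,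
    Finsupp.toMultiset_eq_iff, and_assoc]

section Matching

variable {P1 T1 P2 T2 : Type} {N1 : PNet P1 T1 A} {N2 : PNet P2 T2 A}
  {B : ((P1 → ℕ) × List T1) → ((P2 → ℕ) × List T2) → Prop}

theorem exists_taus_match (hB : IsBranchingBisim N1.stLTS N2.stLTS B) {m1 m1' : P1 → ℕ}
    {m2 : P2 → ℕ} (hrel : B (m1, []) (m2, [])) (h : N1.Taus m1 m1') :
    ∃ m2', N2.Taus m2 m2' ∧ B (m1', []) (m2', []) := by
  obtain ⟨⟨m2', C2'⟩, hT, hrel'⟩ := hB.exists_taus hrel (stLTS_taus_iff.2 ⟨rfl, h⟩)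
  obtain ⟨rfl, hT'⟩ := stLTS_taus_iff.1 hT
  exact ⟨m2', hT', hrel'⟩

theorem exists_visFire_match (hB : IsBranchingBisim N1.stLTS N2.stLTS B) {a : A}
    {m1 m1' : P1 → ℕ} {m2 : P2 → ℕ} (hrel : B (m1, []) (m2, [])) (h : N1.visFire a m1 m1') :
    ∃ m2a m2b m2', N2.Taus m2 m2a ∧ N2.visFire a m2a m2b ∧ N2.Taus m2b m2' ∧
      B (m1', []) (m2', []) := by
  obtain ⟨s1, hplus, hminus⟩ := exists_stTr_plus_minus_of_visFire h
  obtain ⟨⟨m2a, C2a⟩, ⟨m2p, C2p⟩, hT, hplus2, hrel2⟩ := hB.exists_weak_tr hrel hplus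
  obtain ⟨rfl, hTa⟩ := stLTS_taus_iff.1 hT
  obtain ⟨⟨m2q, C2q⟩, ⟨m2', C2'⟩, hT', hminus2, hrel3⟩ := hB.exists_weak_tr hrel2 hminus
  obtain ⟨rfl, m2b, hvis, hTb⟩ := visFire_taus_of_stTr_plus_minus hplus2 hT' hminus2
  exact ⟨m2a, m2b, m2', hTa, hvis, hTb, hrel3⟩

theorem exists_seqReach_match (hB : IsBranchingBisim N1.stLTS N2.stLTS B) {σ : List A}
    {m1 m1' : P1 → ℕ} {m2 : P2 → ℕ} (hrel : B (m1, []) (m2, [])) (h : N1.seqReach σ m1 m1') :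
    ∃ m2', N2.seqReach σ m2 m2' ∧ B (m1', []) (m2', []) := by
  induction σ generalizing m1 m2 with
  | nil => exact exists_taus_match hB hrel h
  | cons a σ ih =>
    obtain ⟨ma, mb, hTa, hvis, hseq⟩ := h
    obtain ⟨m2a, hT2a, hrela⟩ := exists_taus_match hB hrel hTa
    obtain ⟨m2x, m2y, m2b, hT2x, hvis2, hT2b, hrelb⟩ := exists_visFire_match hB hrela hvis
    obtain ⟨m2', hseq2, hrel'⟩ := ih hrelb hseq
    exact ⟨m2', ⟨m2x, m2y, hT2a.trans hT2x, hvis2, hT2b.trans_seqReach hseq2⟩, hrel'⟩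

theorem exists_plus_phases_match (hB : IsBranchingBisim N1.stLTS N2.stLTS B)
    (S : Multiset T1) {m1 : P1 → ℕ} {C1 : List T1} {m2 : P2 → ℕ} {C2 : List T2}
    (hrel : B (m1, C1) (m2, C2)) (hs2 : N2.Stable m2)
    (hS : ∀ t ∈ S, t ∈ N1.trans ∧ N1.l t ≠ none) (hpre : ∀ p, (S.map (N1.pre · p)).sum ≤ m1 p) :
    ∃ S' : Multiset T2, S'.map N2.l = S.map N1.l ∧ (∀ t ∈ S', t ∈ N2.trans) ∧
      ∀ p, (S'.map (N2.pre · p)).sum ≤ m2 p := by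
  induction S using Multiset.induction_on generalizing m1 C1 m2 C2 with
  | empty => exact ⟨0, rfl, by simp, by simp⟩
  | cons t S ih =>
    obtain ⟨htr, hvis⟩ := hS t (Multiset.mem_cons_self t S)
    obtain ⟨a, ha⟩ := Option.ne_none_iff_exists'.1 hvis
    have hpre' : ∀ p, N1.pre t p + (S.map (N1.pre · p)).sum ≤ m1 p := by simpa using hpre
    have hplus : N1.stLTS.tr (m1, C1) (some (.plus a))
        (fun p => m1 p - N1.pre t p, C1 ++ [t]) :=
      ⟨t, ha, ⟨htr, fun p => le_of_add_le_left (hpre' p)⟩, fun _ => rfl, rfl⟩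
    obtain ⟨⟨m2', C2'⟩, ⟨t', ha', hen', hm2', -⟩, hrel'⟩ :=
      hB.exists_tr_of_stable hrel (stable_stLTS_iff.2 hs2) hplus
    obtain ⟨S', hmap, htr', hpre''⟩ := ih hrel'
      (hs2.anti fun p => (hm2' p).trans_le (Nat.sub_le _ _))
      (fun u hu => hS u (Multiset.mem_cons_of_mem hu))
      (fun p => Nat.le_sub_of_add_le' (hpre' p))
    refine ⟨t' ::ₘ S', by simp [hmap, ha, ha'], fun u hu => ?_, fun p => ?_⟩
    · rcases Multiset.mem_cons.1 hu with rfl | hu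
      exacts [hen'.1, htr' u hu]
    · have := hpre'' p
      have : m2' p = m2 p - N2.pre t' p := hm2' p
      have : N2.pre t' p ≤ m2 p := hen'.2 p
      simp only [Multiset.map_cons, Multiset.sum_cons]
      omega

theorem stepTo_match (hB : IsBranchingBisim N1.stLTS N2.stLTS B) {m1 : P1 → ℕ}
    {C1 : List T1} {m2 : P2 → ℕ} {C2 : List T2} (hrel : B (m1, C1) (m2, C2))
    (hs2 : N2.Stable m2) {X : A → ℕ} (h : N1.stepTo m1 X) : N2.stepTo m2 X := by
  rw [stepTo_iff_exists_multiset] at h ⊢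
  obtain ⟨S, hS0, hS, hpre, hlab⟩ := h
  obtain ⟨S', hmap, htr', hpre'⟩ :=
    exists_plus_phases_match hB S hrel hs2 hS hpre
  refine ⟨S', ?_, fun t ht => ⟨htr' t ht, ?_⟩, hpre', fun a => hmap ▸ hlab a⟩
  · rintro rfl
    exact hS0 (Multiset.map_eq_zero.1 (hmap ▸ Multiset.map_zero N2.l))
  · obtain ⟨u, hu, hlu⟩ := Multiset.mem_map.1 (hmap ▸ Multiset.mem_map_of_mem N2.l ht)
    exact hlu ▸ (hS u hu).2

theorem StepReadyPair.of_isBranchingBisim (hB : IsBranchingBisim N1.stLTS N2.stLTS B)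
    (hED : ∀ s1 s2, B s1 s2 → N2.stLTS.Diverges s2 → N1.stLTS.Diverges s1)
    {σ : List A} {X : Set (A → ℕ)} (h : N1.StepReadyPair σ X) : N2.StepReadyPair σ X := by
  obtain ⟨M, hseq, hs, rfl⟩ := h
  obtain ⟨M2, hseq2, hrel⟩ := exists_seqReach_match hB hB.1 hseq
  obtain ⟨⟨M2', C2'⟩, hT, hs2, hrel'⟩ :=
    hB.exists_stable_of_stable hED (stable_stLTS_iff.2 hs) hrel
  obtain ⟨rfl, hT'⟩ := stLTS_taus_iff.1 hT
  exact ⟨M2', hseq2.trans_taus hT', stable_stLTS_iff.1 hs2, Set.ext fun _ =>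
    ⟨stepTo_match hB hrel' (stable_stLTS_iff.1 hs2), stepTo_match hB.symm hrel' hs⟩⟩

end Matching

end PNet

/-- Branching ST-bisimilarity with explicit divergence implies
step readiness equivalence. -/
theorem branching_ST_bisim_ED_implies_step_readiness_equiv
    {P1 T1 P2 T2 A : Type} (N1 : PNet P1 T1 A) (N2 : PNet P2 T2 A)
    (h : BranchingSTBisimilarED N1 N2) :
    StepReadinessEquiv N1 N2 := by
  obtain ⟨B, hB, hED⟩ := h
  exact fun σ X => ⟨PNet.StepReadyPair.of_isBranchingBisim hB fun s1 s2 h => (hED s1 s2 h).2,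
    PNet.StepReadyPair.of_isBranchingBisim hB.symm fun s2 s1 h => (hED s1 s2 h).1⟩
end

section
/- Any sequential component with interface is distributed, i.e., if (N, I, O) is a sequential component with interface then the Petri net N is distributed. -/
open scoped Classical

/-- any sequential component with interface is distributed. -/
theorem sequential_component_distributed {P Tr A : Type}
    (C : NetComponent P Tr A) (hseq : C.Sequential) :
    C.net.Distributed := by
  obtain ⟨Q, hQsub, htrans, q0, hq0Q, hq01, hq00⟩ := hseq
  -- invariant: exactly one token in Q
  have key : ∀ M, C.net.Reachable M →
      ∃ q ∈ Q, M q = 1 ∧ ∀ q' ∈ Q, q' ≠ q → M q' = 0 := by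
    intro M hM
    induction hM with
    | refl => exact ⟨q0, hq0Q, hq01, hq00⟩
    | @step M G M' _ hstep ih =>
      obtain ⟨q, hqQ, hq1, hq0⟩ := ih
      obtain ⟨hGne, hGsub, hpreM, hM'⟩ := hstep
      have MQle : ∀ q' ∈ Q, M q' ≤ 1 := by
        intro q' hq'
        by_cases h : q' = q
        · simp [h, hq1]
        · simp [hq0 q' hq' h]
      obtain ⟨t₀, ht₀⟩ := Finsupp.support_nonempty_iff.mpr hGne
      have hps : ∀ p, C.net.preStep G p = ∑ t ∈ G.support, G t * C.net.pre t p :=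
        fun _ => rfl
      have hlow : ∀ t ∈ G.support, ∀ p, G t * C.net.pre t p ≤ C.net.preStep G p := by
        intro t ht p
        rw [hps]
        exact Finset.single_le_sum (f := fun t => G t * C.net.pre t p)
          (fun _ _ => Nat.zero_le _) ht
      obtain ⟨⟨qt, hqtQ, hqt1, hqt0⟩, rt, hrtQ, hrt1, hrt0⟩ :=
        htrans t₀ (hGsub ht₀)
      have hGt₀pos : 1 ≤ G t₀ := Nat.one_le_iff_ne_zero.mpr
        (Finsupp.mem_support_iff.mp ht₀)
      have hMqt : G t₀ ≤ M qt := by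
        have := hlow t₀ ht₀ qt
        rw [hqt1, Nat.mul_one] at this
        exact this.trans (hpreM qt)
      have hqtq : qt = q := by
        by_contra h
        have := hq0 qt hqtQ h
        omega
      subst hqtq
      have hGt₀ : G t₀ = 1 := by
        have : M qt ≤ 1 := MQle qt hqtQ
        omega
      have huniq : ∀ u ∈ G.support, u = t₀ := by
        intro u hu
        by_contra hne
        obtain ⟨⟨qu, hquQ, hqu1, hqu0⟩, _⟩ := htrans u (hGsub hu)
        have hGupos : 1 ≤ G u := Nat.one_le_iff_ne_zero.mpr
          (Finsupp.mem_support_iff.mp hu)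
        have hMqu : G u ≤ M qu := by
          have := hlow u hu qu
          rw [hqu1, Nat.mul_one] at this
          exact this.trans (hpreM qu)
        have hquq : qu = qt := by
          by_contra h
          have := hq0 qu hquQ h
          omega
        rw [hquq] at hqu1
        -- both t₀ and u consume from q
        have hpair : ({t₀, u} : Finset Tr) ⊆ G.support := by
          intro x hx
          rcases Finset.mem_insert.mp hx with h | h
          · exact h ▸ ht₀
          · exact (Finset.mem_singleton.mp h) ▸ hu
        have hsum : G t₀ * C.net.pre t₀ qt + G u * C.net.pre u qt ≤ C.net.preStep G qt := by
          rw [hps]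
          have := Finset.sum_le_sum_of_subset (f := fun t => G t * C.net.pre t qt) hpair
          rwa [Finset.sum_pair (Ne.symm hne)] at this
        rw [hqt1, hqu1] at hsum
        have := (hsum.trans (hpreM qt))
        have := hq1
        omega
      have hsupp : G.support = {t₀} :=
        Finset.eq_singleton_iff_unique_mem.mpr ⟨ht₀, huniq⟩
      have hpreG : ∀ p, C.net.preStep G p = C.net.pre t₀ p := by
        intro p
        rw [hps, hsupp, Finset.sum_singleton, hGt₀, Nat.one_mul]
      have hpostG : ∀ p, C.net.postStep G p = C.net.post t₀ p := by
        intro p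
        show (G.sum fun t n => n * C.net.post t p) = _
        rw [Finsupp.sum, hsupp, Finset.sum_singleton, hGt₀, Nat.one_mul]
      have hM'p : ∀ p, M' p = M p - C.net.pre t₀ p + C.net.post t₀ p := by
        intro p
        rw [hM' p, hpreG, hpostG]
      refine ⟨rt, hrtQ, ?_, ?_⟩
      · rw [hM'p rt]
        by_cases h : rt = qt
        · subst h
          rw [hq1, hqt1, hrt1]
        · rw [hq0 rt hrtQ h, hqt0 rt hrtQ h, hrt1]
      · intro q' hq' hne
        rw [hM'p q']
        rw [hrt0 q' hq' hne]
        by_cases h : q' = qt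
        · subst h
          rw [hq1, hqt1]
        · rw [hq0 q' hq' h, hqt0 q' hq' h]
  -- no two transitions are concurrent
  have noconc : ∀ t u, ¬ C.net.Conc t u := by
    rintro t u ⟨ht, hu, M, hM, hle⟩
    obtain ⟨q, hqQ, hq1, hq0⟩ := key M hM
    obtain ⟨⟨qt, hqtQ, hqt1, _⟩, _⟩ := htrans t ht
    obtain ⟨⟨qu, hquQ, hqu1, _⟩, _⟩ := htrans u hu
    have MQle : ∀ q' ∈ Q, M q' ≤ 1 := by
      intro q' hq'
      by_cases h : q' = q
      · simp [h, hq1]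
      · simp [hq0 q' hq' h]
    by_cases h : qt = qu
    · have := hle qt
      rw [hqt1, h, hqu1] at this
      have := MQle qu hquQ
      omega
    · have h1 := hle qt
      have h2 := hle qu
      rw [hqt1] at h1
      rw [hqu1] at h2
      have : qt ≠ q ∨ qu ≠ q := by
        rcases eq_or_ne qt q with rfl | hh
        · exact Or.inr fun hh => h (hh.symm ▸ rfl)
        · exact Or.inl hh
      rcases this with hh | hh
      · have := hq0 qt hqtQ hh; omega
      · have := hq0 qu hquQ hh; omega
  exact ⟨Unit, fun _ => (), fun _ _ _ => rfl, fun t u hc => absurd hc (noconc t u)⟩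
end

section
/- Every LSGA net is distributed. -/
open scoped Classical

/-- every LSGA net is distributed. -/
theorem lsga_distributed {P Tr A : Type} (N : PNet P Tr A) (h : IsLSGA N) :
    N.Distributed := by
  classical
  obtain ⟨K, C, D, hcomp, hseq, hpar, hDN⟩ := h
  subst hDN
  choose Q hQsub hQtr hQM0 using hseq
  -- places in Q k are not places of other components
  have hplace : ∀ k l, k ≠ l → ∀ q ∈ Q k, q ∉ (C l).net.places := by
    intro k l hkl q hq hql
    have hqk := hQsub k hq
    have hmem : q ∈ (C k).net.places ∩ (C l).net.places := ⟨hqk.1, hql⟩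
    rw [hcomp.2.1 k l hkl] at hmem
    exact hqk.2 hmem.1
  -- transitions of other components do not touch Q k
  have hpre0 : ∀ k l, k ≠ l → ∀ t ∈ (C l).net.trans, ∀ q ∈ Q k,
      D.net.pre t q = 0 := by
    intro k l hkl t ht q hq
    rw [hpar.pre_eq l t ht]
    by_contra h0
    exact hplace k l hkl q hq ((C l).net.pre_wf t q h0).2
  have hpost0 : ∀ k l, k ≠ l → ∀ t ∈ (C l).net.trans, ∀ q ∈ Q k,
      D.net.post t q = 0 := by
    intro k l hkl t ht q hq
    rw [hpar.post_eq l t ht]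
    by_contra h0
    exact hplace k l hkl q hq ((C l).net.post_wf t q h0).2
  -- every transition of D lies in some (unique) component
  have htransU : ∀ t ∈ D.net.trans, ∃ k, t ∈ (C k).net.trans := by
    intro t ht
    rw [hpar.trans_eq] at ht
    exact Set.mem_iUnion.mp ht
  -- the one-token invariant for each component
  have inv : ∀ k M, D.net.Reachable M →
      ∃ q ∈ Q k, M q = 1 ∧ ∀ q' ∈ Q k, q' ≠ q → M q' = 0 := by
    intro k M hM
    induction hM with
    | refl =>
      obtain ⟨q, hqQ, hq1, hq0⟩ := hQM0 k
      have hM0 : ∀ q'' ∈ Q k, D.net.M0 q'' = (C k).net.M0 q'' := by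
        intro q'' hq''
        rw [hpar.M0_eq q'']
        refine finsum_eq_single _ k ?_
        intro l hl
        by_contra h0
        exact hplace k l (Ne.symm hl) q'' hq'' ((C l).net.M0_wf q'' h0)
      refine ⟨q, hqQ, ?_, ?_⟩
      · rw [hM0 q hqQ]; exact hq1
      · intro q' hq' hne
        rw [hM0 q' hq']
        exact hq0 q' hq' hne
    | @step M G M' _ hstep ih =>
      obtain ⟨q, hqQ, hq1, hq0⟩ := ih
      obtain ⟨hGne, hGsub, hGle, hGeq⟩ := hstep
      have hsumform : ∀ p, D.net.preStep G p = ∑ t ∈ G.support, G t * D.net.pre t p :=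
        fun p => rfl
      have hsumform' : ∀ p, D.net.postStep G p = ∑ t ∈ G.support, G t * D.net.post t p :=
        fun p => rfl
      by_cases hex : ∃ t ∈ G.support, t ∈ (C k).net.trans
      · -- one transition of component k fires
        obtain ⟨t0, ht0G, ht0k⟩ := hex
        obtain ⟨⟨qt, hqtQ, hqt1, hqt0⟩, ⟨qp, hqpQ, hqp1, hqp0⟩⟩ := hQtr k t0 ht0k
        have hpt0 : D.net.pre t0 qt = 1 := by rw [hpar.pre_eq k t0 ht0k]; exact hqt1
        have ht0pos : 1 ≤ G t0 := Nat.one_le_iff_ne_zero.mpr (Finsupp.mem_support_iff.mp ht0G)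
        -- the pre-place of any k-transition in G must be q
        have hqeq : ∀ t1 ∈ G.support, t1 ∈ (C k).net.trans →
            ∀ q1 ∈ Q k, (C k).net.pre t1 q1 = 1 → q1 = q := by
          intro t1 ht1G ht1k q1 hq1Q hq1pre
          by_contra hne
          have hM0' : M q1 = 0 := hq0 q1 hq1Q hne
          have h1 : G t1 * D.net.pre t1 q1 ≤ D.net.preStep G q1 := by
            rw [hsumform]
            exact Finset.single_le_sum (f := fun t => G t * D.net.pre t q1)
              (fun i _ => Nat.zero_le _) ht1G
          have h2 : D.net.pre t1 q1 = 1 := by rw [hpar.pre_eq k t1 ht1k]; exact hq1pre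
          have h3 := hGle q1
          have ht1pos : 1 ≤ G t1 := Nat.one_le_iff_ne_zero.mpr (Finsupp.mem_support_iff.mp ht1G)
          rw [h2, mul_one] at h1
          omega
        have hqtq : qt = q := hqeq t0 ht0G ht0k qt hqtQ hqt1
        subst hqtq
        -- uniqueness of the k-transition in G, and its multiplicity is 1
        have huniq : ∀ t1 ∈ G.support, t1 ∈ (C k).net.trans → t1 = t0 := by
          intro t1 ht1G ht1k
          by_contra hne
          obtain ⟨⟨q1, hq1Q, hq1pre, _⟩, _⟩ := hQtr k t1 ht1k
          have hq1q : q1 = qt := hqeq t1 ht1G ht1k q1 hq1Q hq1pre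
          have h2 : D.net.pre t1 qt = 1 := by
            rw [hpar.pre_eq k t1 ht1k, ← hq1q]; exact hq1pre
          have ht1pos : 1 ≤ G t1 := Nat.one_le_iff_ne_zero.mpr (Finsupp.mem_support_iff.mp ht1G)
          have ht1e : t1 ∈ G.support.erase t0 := Finset.mem_erase.mpr ⟨hne, ht1G⟩
          have hbig : G t0 * D.net.pre t0 qt + G t1 * D.net.pre t1 qt ≤
              D.net.preStep G qt := by
            rw [hsumform, ← Finset.add_sum_erase _ _ ht0G]
            have h4 : G t1 * D.net.pre t1 qt ≤
                ∑ x ∈ G.support.erase t0, G x * D.net.pre x qt :=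
              Finset.single_le_sum (f := fun t => G t * D.net.pre t qt)
                (fun i _ => Nat.zero_le _) ht1e
            omega
          have h3 := hGle qt
          rw [hpt0, h2, mul_one, mul_one] at hbig
          omega
        have hGt01 : G t0 = 1 := by
          have h1 : G t0 * D.net.pre t0 qt ≤ D.net.preStep G qt := by
            rw [hsumform]
            exact Finset.single_le_sum (f := fun t => G t * D.net.pre t qt)
              (fun i _ => Nat.zero_le _) ht0G
          have h3 := hGle qt
          rw [hpt0, mul_one] at h1
          omega
        -- pre and post steps on Q k come from t0 alone
        have hother : ∀ t1 ∈ G.support, t1 ≠ t0 → ∀ q'' ∈ Q k,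
            D.net.pre t1 q'' = 0 ∧ D.net.post t1 q'' = 0 := by
          intro t1 ht1G hne q'' hq''
          obtain ⟨l, hl⟩ := htransU t1 (hGsub ht1G)
          have hlk : l ≠ k := by
            intro hlk; subst hlk; exact hne (huniq t1 ht1G hl)
          exact ⟨hpre0 k l (Ne.symm hlk) t1 hl q'' hq'',
            hpost0 k l (Ne.symm hlk) t1 hl q'' hq''⟩
        have hps : ∀ q'' ∈ Q k, D.net.preStep G q'' = (C k).net.pre t0 q'' := by
          intro q'' hq''
          rw [hsumform, Finset.sum_eq_single_of_mem t0 ht0G]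
          · rw [hGt01, one_mul, hpar.pre_eq k t0 ht0k]
          · intro t1 ht1G hne
            rw [(hother t1 ht1G hne q'' hq'').1, mul_zero]
        have hps' : ∀ q'' ∈ Q k, D.net.postStep G q'' = (C k).net.post t0 q'' := by
          intro q'' hq''
          rw [hsumform', Finset.sum_eq_single_of_mem t0 ht0G]
          · rw [hGt01, one_mul, hpar.post_eq k t0 ht0k]
          · intro t1 ht1G hne
            rw [(hother t1 ht1G hne q'' hq'').2, mul_zero]
        refine ⟨qp, hqpQ, ?_, ?_⟩
        · rw [hGeq qp, hps qp hqpQ, hps' qp hqpQ, hqp1]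
          by_cases hqq : qp = qt
          · subst hqq
            rw [hq1, hqt1]
          · rw [hq0 qp hqpQ hqq, hqt0 qp hqpQ hqq]
        · intro q' hq'Q hne
          rw [hGeq q', hps q' hq'Q, hps' q' hq'Q, hqp0 q' hq'Q hne]
          by_cases hqq : q' = qt
          · subst hqq
            rw [hq1, hqt1]
          · rw [hq0 q' hq'Q hqq, hqt0 q' hq'Q hqq]
      · -- no transition of component k fires: marking on Q k unchanged
        have hzero : ∀ q'' ∈ Q k,
            D.net.preStep G q'' = 0 ∧ D.net.postStep G q'' = 0 := by
          intro q'' hq''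
          constructor
          · rw [hsumform]
            refine Finset.sum_eq_zero ?_
            intro t ht
            obtain ⟨l, hl⟩ := htransU t (hGsub ht)
            have hlk : l ≠ k := fun e => hex ⟨t, ht, e ▸ hl⟩
            rw [hpre0 k l (Ne.symm hlk) t hl q'' hq'', mul_zero]
          · rw [hsumform']
            refine Finset.sum_eq_zero ?_
            intro t ht
            obtain ⟨l, hl⟩ := htransU t (hGsub ht)
            have hlk : l ≠ k := fun e => hex ⟨t, ht, e ▸ hl⟩
            rw [hpost0 k l (Ne.symm hlk) t hl q'' hq'', mul_zero]
        refine ⟨q, hqQ, ?_, ?_⟩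
        · rw [hGeq q, (hzero q hqQ).1, (hzero q hqQ).2, hq1]
        · intro q' hq' hne
          rw [hGeq q', (hzero q' hq').1, (hzero q' hq').2, hq0 q' hq' hne]
  -- the distribution
  refine ⟨Option K, fun x => match x with
    | Sum.inr t => if h : ∃ k, t ∈ (C k).net.trans then some h.choose else none
    | Sum.inl p => if h : ∃ k, p ∈ (C k).I then some h.choose else
        if h' : ∃ k, p ∈ (C k).net.places then some h'.choose else none, ?_, ?_⟩
  · -- transitions co-located with their preplaces
    intro t p hpre
    have ht : ∃ k, t ∈ (C k).net.trans :=
      htransU t (D.net.pre_wf t p hpre).1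
    simp only [dif_pos ht]
    set k := ht.choose with hk
    have hkmem : t ∈ (C k).net.trans := ht.choose_spec
    have hprek : (C k).net.pre t p ≠ 0 := by
      rw [← hpar.pre_eq k t hkmem]; exact hpre
    have hpk : p ∈ (C k).net.places := ((C k).net.pre_wf t p hprek).2
    have hpO : p ∉ (C k).O := by
      intro hO
      exact hprek ((C k).O_noPost p hO t)
    by_cases hI : ∃ l, p ∈ (C l).I
    · simp only [dif_pos hI]
      set l := hI.choose with hl
      have hlmem : p ∈ (C l).I := hI.choose_spec
      congr 1
      by_contra hkl
      have hpl : p ∈ (C l).net.places := (C l).I_sub hlmem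
      have hmem : p ∈ (C k).net.places ∩ (C l).net.places := ⟨hpk, hpl⟩
      rw [hcomp.2.1 k l hkl] at hmem
      have hpkI : p ∈ (C k).I := hmem.1.resolve_right hpO
      exact (hcomp.2.2 k l hkl).ne_of_mem hpkI hlmem rfl
    · have hP : ∃ l, p ∈ (C l).net.places := ⟨k, hpk⟩
      simp only [dif_neg hI, dif_pos hP]
      set l := hP.choose with hl
      have hlmem : p ∈ (C l).net.places := hP.choose_spec
      congr 1
      by_contra hkl
      have hmem : p ∈ (C k).net.places ∩ (C l).net.places := ⟨hpk, hlmem⟩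
      rw [hcomp.2.1 k l hkl] at hmem
      exact hI ⟨k, hmem.1.resolve_right hpO⟩
  · -- concurrent transitions are in distinct locations
    intro t u hconc hEq
    obtain ⟨htD, huD, M, hM, hsum⟩ := hconc
    have ht : ∃ k, t ∈ (C k).net.trans := htransU t htD
    have hu : ∃ k, u ∈ (C k).net.trans := htransU u huD
    simp only [dif_pos ht, dif_pos hu, Option.some.injEq] at hEq
    set k := ht.choose with hk
    have htk : t ∈ (C k).net.trans := ht.choose_spec
    have huk : u ∈ (C k).net.trans := by rw [hEq]; exact hu.choose_spec
    obtain ⟨q, hqQ, hq1, hq0⟩ := inv k M hM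
    obtain ⟨⟨qt, hqtQ, hqt1, _⟩, _⟩ := hQtr k t htk
    obtain ⟨⟨qu, hquQ, hqu1, _⟩, _⟩ := hQtr k u huk
    have hpt : D.net.pre t qt = 1 := by rw [hpar.pre_eq k t htk]; exact hqt1
    have hpu : D.net.pre u qu = 1 := by rw [hpar.pre_eq k u huk]; exact hqu1
    have hqtq : qt = q := by
      by_contra hne
      have := hsum qt
      rw [hpt, hq0 qt hqtQ hne] at this
      omega
    have hquq : qu = q := by
      by_contra hne
      have := hsum qu
      rw [hpu, hq0 qu hquQ hne] at this
      omega
    have h1 : D.net.pre t q = 1 := hqtq ▸ hpt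
    have h2 : D.net.pre u q = 1 := hquq ▸ hpu
    have := hsum q
    rw [h1, h2, hq1] at this
    omega
end

section
/- A Petri net is distributed if and only if there is no sequence t0, t1, …, tn of transitions with t0 ⌣ tn and •t_{i−1} ∩ •t_i ≠ ∅ for all i = 1, …, n. -/
open scoped Classical

/-!
Every distribution places a transition together with its preplaces, hence places two
transitions sharing a preplace, and therefore any two transitions linked by a chain of
shared preplaces, at the same location; so no such chain may end in a concurrent pair.
Conversely, if no chain links a concurrent pair, locating every transition at the set
of transitions it is linked to, and every place at the set of transitions linked to one
of its posttransitions, is a distribution.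
-/

open Relation

namespace PNet

variable {P Tr A : Type} (N : PNet P Tr A)

def SharesPreplace (t u : Tr) : Prop :=
  ∃ p, N.pre t p ≠ 0 ∧ N.pre u p ≠ 0

instance : Std.Symm N.SharesPreplace where
  symm _ _ := fun ⟨p, ht, hu⟩ => ⟨p, hu, ht⟩

def IsPreplaceChain (n : ℕ) (t : ℕ → Tr) : Prop :=
  ∀ i, 1 ≤ i → i ≤ n → N.SharesPreplace (t (i - 1)) (t i)

variable {N}

theorem IsPreplaceChain.reflTransGen {n : ℕ} {t : ℕ → Tr} (h : N.IsPreplaceChain n t) :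
    ReflTransGen N.SharesPreplace (t 0) (t n) := by
  induction n with
  | zero => exact .refl
  | succ n ih =>
    refine (ih fun i h1 h2 => h i h1 (by omega)).tail ?_
    simpa using h (n + 1) (by omega) le_rfl

theorem IsPreplaceChain.mem_trans {n : ℕ} {t : ℕ → Tr} (h : N.IsPreplaceChain n t)
    (h0 : t 0 ∈ N.trans) : ∀ i ≤ n, t i ∈ N.trans := by
  rintro (_ | i) hi
  · exact h0
  · obtain ⟨p, -, hp⟩ := h (i + 1) (by omega) hi
    exact (N.pre_wf _ p hp).1

theorem exists_isPreplaceChain_of_reflTransGen {t u : Tr}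
    (h : ReflTransGen N.SharesPreplace t u) :
    ∃ (n : ℕ) (f : ℕ → Tr), f 0 = t ∧ f n = u ∧ N.IsPreplaceChain n f := by
  induction h with
  | refl => exact ⟨0, fun _ => t, rfl, rfl, fun i h1 h2 => by omega⟩
  | @tail b c _ hbc ih =>
    obtain ⟨n, f, hf0, hfn, hf⟩ := ih
    refine ⟨n + 1, fun i => if i ≤ n then f i else c, by simpa using hf0, by simp, ?_⟩
    intro i h1 h2
    rcases Nat.lt_or_ge n i with hi | hi
    · obtain rfl : i = n + 1 := by omega
      simpa [hfn] using hbc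
    · simpa [hi, show i - 1 ≤ n by omega] using hf i h1 hi

theorem DistributedWrt.eq_of_reflTransGen {Loc : Type} {D : P ⊕ Tr → Loc}
    (hD : N.DistributedWrt D) {t u : Tr} (h : ReflTransGen N.SharesPreplace t u) :
    D (.inr t) = D (.inr u) := by
  induction h with
  | refl => rfl
  | tail _ hbc ih =>
    obtain ⟨p, hb, hc⟩ := hbc
    rw [ih, hD.1 _ p hb, hD.1 _ p hc]

variable (N)

def preplaceComponent : P ⊕ Tr → Set Tr
  | .inl p => {u | ∃ t, N.pre t p ≠ 0 ∧ ReflTransGen N.SharesPreplace t u}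
  | .inr t => {u | ReflTransGen N.SharesPreplace t u}

variable {N}

theorem distributedWrt_preplaceComponent
    (h : ∀ t u, N.Conc t u → ¬ ReflTransGen N.SharesPreplace t u) :
    N.DistributedWrt N.preplaceComponent := by
  refine ⟨fun t p hp => ?_, fun t u hc heq => h t u hc ?_⟩
  · ext u
    refine ⟨fun htu => ⟨t, hp, htu⟩, fun ⟨t', ht', ht'u⟩ => ?_⟩
    exact ReflTransGen.head ⟨p, hp, ht'⟩ ht'u
  · have hu : u ∈ N.preplaceComponent (.inr u) := ReflTransGen.refl
    rwa [← heq] at hu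

theorem distributed_iff_forall_conc_not_reflTransGen :
    N.Distributed ↔ ∀ t u, N.Conc t u → ¬ ReflTransGen N.SharesPreplace t u :=
  ⟨fun ⟨_, _, hD⟩ t u hc htu => hD.2 t u hc (hD.eq_of_reflTransGen htu),
    fun h => ⟨_, _, distributedWrt_preplaceComponent h⟩⟩

end PNet

/-- a Petri net is distributed iff there is no sequence
`t 0, …, t n` of transitions with `t 0 ⌣ t n` and
`•t (i-1) ∩ •t i ≠ ∅` for all `i = 1, …, n`. -/
theorem distributed_iff_no_conflict_chain {P Tr A : Type} (N : PNet P Tr A) :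
    N.Distributed ↔
      ¬ ∃ (n : ℕ) (t : ℕ → Tr), (∀ i ≤ n, t i ∈ N.trans) ∧ N.Conc (t 0) (t n) ∧
        ∀ i, 1 ≤ i → i ≤ n → ∃ p, N.pre (t (i - 1)) p ≠ 0 ∧ N.pre (t i) p ≠ 0 := by
  rw [PNet.distributed_iff_forall_conc_not_reflTransGen]
  constructor
  · rintro h ⟨n, t, -, hc, hchain⟩
    exact h _ _ hc (PNet.IsPreplaceChain.reflTransGen hchain)
  · rintro h t u hc htu
    obtain ⟨n, f, rfl, rfl, hchain⟩ := PNet.exists_isPreplaceChain_of_reflTransGen htu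
    exact h ⟨n, f, hchain.mem_trans hc.1, hc, hchain⟩
end

section
/- For any distributed Petri net N there is an LSGA net N′ such that N′ and N are branching ST-bisimilar with explicit divergence (N′ ≈Δ_bSTb N). -/
/-!
Give every location `k` a fresh place holding one token, which each transition located at `k`
consumes and puts back. The transitions of one location then form a sequential component
(the fresh place is its control place) and the new net is the parallel composition of these
components, i.e. an LSGA net.

The fresh places never block anything the original net can do. For every ST-marking `(M, U)`
reached in the new net, `M + •U` is reachable; as the fresh place of `k` carries exactly one
token in every reachable marking, it is empty in `M` exactly when some transition of `U` is
located at `k`. If a transition `t` enabled in `M` were blocked this way by some `u ∈ U`, then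
`M + •U` would cover `•t + •u`, so `t ⌣ u` although `t` and `u` are co-located. Hence
forgetting the fresh places is a strong bisimulation between the two ST-LTSs, and a strong
bisimulation is a branching bisimulation that respects divergence.
-/

open scoped Classical

namespace LTS

variable {St1 St2 L : Type}

def IsStrongBisim (L1 : LTS St1 L) (L2 : LTS St2 L) (B : St1 → St2 → Prop) : Prop :=
  B L1.init L2.init ∧
    (∀ s1 s2 η s1', B s1 s2 → L1.tr s1 η s1' → ∃ s2', L2.tr s2 η s2' ∧ B s1' s2') ∧
    ∀ s1 s2 η s2', B s1 s2 → L2.tr s2 η s2' → ∃ s1', L1.tr s1 η s1' ∧ B s1' s2'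

theorem Diverges.of_simulation {L1 : LTS St1 L} {L2 : LTS St2 L} {B : St1 → St2 → Prop}
    (hsim : ∀ s1 s2 s1', B s1 s2 → L1.tr s1 none s1' →
      ∃ s2', L2.tr s2 none s2' ∧ B s1' s2')
    {s1 : St1} {s2 : St2} (hB : B s1 s2) (hdiv : L1.Diverges s1) : L2.Diverges s2 := by
  obtain ⟨f, rfl, hf⟩ := hdiv
  -- the implication sits inside the `∃` so that `choose` gives a total successor function
  have hnext : ∀ n y, ∃ y', B (f n) y → L2.tr y none y' ∧ B (f (n + 1)) y' := by
    intro n y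
    by_cases hy : B (f n) y
    · obtain ⟨y', hy'⟩ := hsim _ _ _ hy (hf n)
      exact ⟨y', fun _ => hy'⟩
    · exact ⟨y, fun h => absurd h hy⟩
  choose next hnext using hnext
  let g : ℕ → St2 := fun n => Nat.rec s2 next n
  have hg : ∀ n, B (f n) (g n) := fun n => by
    induction n with
    | zero => exact hB
    | succ n ih => exact (hnext n (g n) ih).2
  exact ⟨g, rfl, fun n => (hnext n (g n) (hg n)).1⟩

theorem IsStrongBisim.isBranchingBisim {L1 : LTS St1 L} {L2 : LTS St2 L}
    {B : St1 → St2 → Prop} (hB : IsStrongBisim L1 L2 B) : IsBranchingBisim L1 L2 B := by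
  refine ⟨hB.1, fun s1 s2 η s1' hs h => ?_, fun s1 s2 η s2' hs h => ?_⟩
  · obtain ⟨s2', h2, hs'⟩ := hB.2.1 s1 s2 η s1' hs h
    exact ⟨s2, s2', .refl, .inl h2, hs, hs'⟩
  · obtain ⟨s1', h1, hs'⟩ := hB.2.2 s1 s2 η s2' hs h
    exact ⟨s1, s1', .refl, .inl h1, hs, hs'⟩

theorem IsStrongBisim.branchingBisimilarED {L1 : LTS St1 L} {L2 : LTS St2 L}
    {B : St1 → St2 → Prop} (hB : IsStrongBisim L1 L2 B) : BranchingBisimilarED L1 L2 :=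
  ⟨B, hB.isBranchingBisim, fun _ _ hs =>
    ⟨Diverges.of_simulation (fun _ _ _ h => hB.2.1 _ _ _ _ h) hs,
      Diverges.of_simulation (B := flip B) (fun _ _ _ h => hB.2.2 _ _ _ _ h) hs⟩⟩

end LTS

namespace PNet

variable {P Tr A : Type} {N : PNet P Tr A}

theorem Reachable.fire {M M' : P → ℕ} {t : Tr} (hM : N.Reachable M) (h : N.fire M t M') :
    N.Reachable M' := by
  refine hM.step (G := Finsupp.single t 1)
    ⟨by simp, by simpa using h.1.1, fun p => ?_, fun p => ?_⟩
  · simpa [preStep] using h.1.2 p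
  · simpa [preStep, postStep] using h.2 p

/-- `•U`, for a sequence `U` of transitions. -/
def preSum (N : PNet P Tr A) (U : List Tr) (p : P) : ℕ :=
  (U.map (N.pre · p)).sum

theorem preSum_append_singleton (U : List Tr) (t : Tr) (p : P) :
    N.preSum (U ++ [t]) p = N.preSum U p + N.pre t p := by
  simp [preSum]

theorem pre_le_preSum {U : List Tr} {u : Tr} (hu : u ∈ U) (p : P) :
    N.pre u p ≤ N.preSum U p :=
  List.le_sum_of_mem (List.mem_map_of_mem hu)

theorem preSum_eq_of_getElem? {U : List Tr} {n : ℕ} {t : Tr} (h : U[n]? = some t) (p : P) :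
    N.preSum U p = N.pre t p + N.preSum (U.eraseIdx n) p := by
  obtain ⟨hn, rfl⟩ := List.getElem?_eq_some_iff.mp h
  simpa [preSum] using ((List.getElem_cons_eraseIdx_perm hn).map (N.pre · p)).sum_eq.symm

def STConsistent (N : PNet P Tr A) (s : (P → ℕ) × List Tr) : Prop :=
  (∀ u ∈ s.2, u ∈ N.trans) ∧ N.Reachable fun p => s.1 p + N.preSum s.2 p

theorem STConsistent.init : N.STConsistent N.stLTS.init :=
  ⟨by simp [stLTS], by simpa [stLTS, preSum] using Reachable.refl⟩

theorem STConsistent.stTr {s s' : (P → ℕ) × List Tr} {η : Option (STLabel A)}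
    (hs : N.STConsistent s) (h : N.stTr s η s') : N.STConsistent s' := by
  obtain ⟨hU, hreach⟩ := hs
  match η, h with
  | some (.plus _), ⟨t, _, hen, hM, hU'⟩ =>
    -- starting `t` moves its preset from `M` to `•U`
    refine ⟨by simpa [hU', or_imp, forall_and] using ⟨hU, hen.1⟩, ?_⟩
    convert hreach using 2 with p
    rw [hU', preSum_append_singleton, hM p]
    have := hen.2 p
    omega
  | some (.minus _ n), ⟨t, hn, _, hU', hM⟩ =>
    refine ⟨fun u hu => hU u (List.mem_of_mem_eraseIdx (hU' ▸ hu)),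
      hreach.fire ⟨⟨hU t (List.mem_of_getElem? hn), fun p => ?_⟩, fun p => ?_⟩⟩
    all_goals
      have := preSum_eq_of_getElem? (N := N) hn p
      beta_reduce
    · omega
    · rw [hU', hM p]
      omega
  | none, ⟨t, _, ⟨hen, hM⟩, hU'⟩ =>
    refine ⟨hU' ▸ hU, hreach.fire ⟨⟨hen.1, fun p => ?_⟩, fun p => ?_⟩⟩
    all_goals
      have := hen.2 p
      beta_reduce
    · omega
    · rw [hU', hM p]
      omega

noncomputable def restrict (N : PNet P Tr A) (S : Set P) (T : Set Tr) (M0 : P → ℕ)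
    (hpre : ∀ t ∈ T, ∀ p, N.pre t p ≠ 0 → p ∈ S)
    (hpost : ∀ t ∈ T, ∀ p, N.post t p ≠ 0 → p ∈ S)
    (hM0 : ∀ p, M0 p ≠ 0 → p ∈ S) : PNet P Tr A where
  places := S
  trans := T ∩ N.trans
  pre t p := if t ∈ T then N.pre t p else 0
  post t p := if t ∈ T then N.post t p else 0
  M0 := M0
  l := N.l
  pre_wf t p h := by
    split_ifs at h with ht
    · exact ⟨⟨ht, (N.pre_wf t p h).1⟩, hpre t ht p h⟩
    · exact absurd rfl h
  post_wf t p h := by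
    split_ifs at h with ht
    · exact ⟨⟨ht, (N.post_wf t p h).1⟩, hpost t ht p h⟩
    · exact absurd rfl h
  M0_wf := hM0

section Sequentialize

variable {Loc : Type} {D : P ⊕ Tr → Loc}

def PreplacesColocated (N : PNet P Tr A) (D : P ⊕ Tr → Loc) : Prop :=
  ∀ t p, N.pre t p ≠ 0 → D (.inr t) = D (.inl p)

def ConcurrentApart (N : PNet P Tr A) (D : P ⊕ Tr → Loc) : Prop :=
  ∀ t u, N.Conc t u → D (.inr t) ≠ D (.inr u)

noncomputable def locArc (N : PNet P Tr A) (D : P ⊕ Tr → Loc) (t : Tr) (k : Loc) : ℕ :=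
  if t ∈ N.trans ∧ D (.inr t) = k then 1 else 0

theorem locArc_ne_zero {t : Tr} {k : Loc} :
    N.locArc D t k ≠ 0 ↔ t ∈ N.trans ∧ D (.inr t) = k := by
  simp [locArc]

theorem elim_locArc_ne_zero {arc : Tr → P → ℕ}
    (harc : ∀ t p, arc t p ≠ 0 → t ∈ N.trans ∧ p ∈ N.places) (t : Tr) (x : P ⊕ Loc)
    (hx : Sum.elim (arc t) (N.locArc D t) x ≠ 0) :
    t ∈ N.trans ∧ x ∈ Sum.inl '' N.places ∪ Set.range Sum.inr := by
  cases x with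
  | inl p => exact ⟨(harc t p hx).1, .inl ⟨p, (harc t p hx).2, rfl⟩⟩
  | inr k => exact ⟨(locArc_ne_zero.mp hx).1, .inr ⟨k, rfl⟩⟩

noncomputable def sequentialize (N : PNet P Tr A) (D : P ⊕ Tr → Loc) :
    PNet (P ⊕ Loc) Tr A where
  places := Sum.inl '' N.places ∪ Set.range Sum.inr
  trans := N.trans
  pre t := Sum.elim (N.pre t) (N.locArc D t)
  post t := Sum.elim (N.post t) (N.locArc D t)
  M0 := Sum.elim N.M0 fun _ => 1
  l := N.l
  pre_wf := elim_locArc_ne_zero N.pre_wf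
  post_wf := elim_locArc_ne_zero N.post_wf
  M0_wf
    | .inl p, hp => .inl ⟨p, N.M0_wf p hp, rfl⟩
    | .inr k, _ => .inr ⟨k, rfl⟩

theorem IsStep.of_sequentialize {M M' : P ⊕ Loc → ℕ} {G : Tr →₀ ℕ}
    (h : (N.sequentialize D).IsStep M G M') :
    N.IsStep (M ∘ Sum.inl) G (M' ∘ Sum.inl) ∧ M' ∘ Sum.inr = M ∘ Sum.inr := by
  obtain ⟨hG, hsupp, hle, hM'⟩ := h
  refine ⟨⟨hG, hsupp, fun p => hle (.inl p), fun p => hM' (.inl p)⟩, funext fun k => ?_⟩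
  -- a location place is both taken and put back
  have hloop :
      (N.sequentialize D).preStep G (.inr k) = (N.sequentialize D).postStep G (.inr k) :=
    rfl
  have := hle (.inr k)
  simp only [Function.comp_apply, hM' (.inr k), hloop] at this ⊢
  omega

theorem Reachable.of_sequentialize {M : P ⊕ Loc → ℕ} (h : (N.sequentialize D).Reachable M) :
    N.Reachable (M ∘ Sum.inl) ∧ ∀ k, M (.inr k) = 1 := by
  induction h with
  | refl => exact ⟨Reachable.refl, fun _ => rfl⟩
  | step _ hstep ih =>
    obtain ⟨hstep, hinr⟩ := hstep.of_sequentialize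
    exact ⟨ih.1.step hstep, fun k => (congrFun hinr k).trans (ih.2 k)⟩

def forgetLocations (s : (P ⊕ Loc → ℕ) × List Tr) : (P → ℕ) × List Tr :=
  (s.1 ∘ Sum.inl, s.2)

theorem stTr_of_sequentialize {s s' : (P ⊕ Loc → ℕ) × List Tr} {η : Option (STLabel A)}
    (h : (N.sequentialize D).stTr s η s') :
    N.stTr (forgetLocations s) η (forgetLocations s') :=
  match η, h with
  | some (.plus _), ⟨t, hl, hen, hM, hU⟩ =>
    ⟨t, hl, ⟨hen.1, fun p => hen.2 (.inl p)⟩, fun p => hM (.inl p), hU⟩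
  | some (.minus _ _), ⟨t, hn, hl, hU, hM⟩ => ⟨t, hn, hl, hU, fun p => hM (.inl p)⟩
  | none, ⟨t, hl, ⟨hen, hM⟩, hU⟩ =>
    ⟨t, hl, ⟨⟨hen.1, fun p => hen.2 (.inl p)⟩, fun p => hM (.inl p)⟩, hU⟩

theorem enabled_sequentialize (hD : N.ConcurrentApart D) {s : (P ⊕ Loc → ℕ) × List Tr}
    (hs : (N.sequentialize D).STConsistent s) {t : Tr} (ht : N.enabled (s.1 ∘ Sum.inl) t) :
    (N.sequentialize D).enabled s.1 t := by
  refine ⟨ht.1, ?_⟩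
  rintro (p | k)
  · exact ht.2 p
  · show N.locArc D t k ≤ s.1 (.inr k)
    obtain ⟨hreach, hlocks⟩ := hs.2.of_sequentialize
    by_contra hlt
    obtain ⟨-, rfl⟩ := locArc_ne_zero.mp (show N.locArc D t k ≠ 0 by omega)
    rw [locArc, if_pos ⟨ht.1, rfl⟩] at hlt
    have hheld : (N.sequentialize D).preSum s.2 (.inr (D (.inr t))) ≠ 0 := by
      have := hlocks (D (.inr t))
      beta_reduce at this
      omega
    obtain ⟨u, hu, hne⟩ : ∃ u ∈ s.2, N.locArc D u (D (.inr t)) ≠ 0 := by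
      simpa [preSum, sequentialize, List.sum_eq_zero_iff] using hheld
    obtain ⟨huT, hDu⟩ := locArc_ne_zero.mp hne
    exact hD t u ⟨ht.1, huT, _, hreach, fun p => add_le_add (ht.2 p) (pre_le_preSum hu p)⟩
      hDu.symm

theorem exists_stTr_sequentialize (hD : N.ConcurrentApart D) {s : (P ⊕ Loc → ℕ) × List Tr}
    (hs : (N.sequentialize D).STConsistent s) {η : Option (STLabel A)}
    {y : (P → ℕ) × List Tr} (h : N.stTr (forgetLocations s) η y) :
    ∃ s', (N.sequentialize D).stTr s η s' ∧ forgetLocations s' = y :=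
  match η, h with
  | some (.plus _), ⟨t, hl, hen, hM, hU⟩ =>
    ⟨(fun x => s.1 x - (N.sequentialize D).pre t x, s.2 ++ [t]),
      ⟨t, hl, enabled_sequentialize hD hs hen, fun _ => rfl, rfl⟩,
      Prod.ext (funext fun p => (hM p).symm) hU.symm⟩
  | some (.minus _ n), ⟨t, hn, hl, hU, hM⟩ =>
    ⟨(fun x => s.1 x + (N.sequentialize D).post t x, s.2.eraseIdx n),
      ⟨t, hn, hl, rfl, fun _ => rfl⟩, Prod.ext (funext fun p => (hM p).symm) hU.symm⟩
  | none, ⟨t, hl, ⟨hen, hM⟩, hU⟩ =>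
    ⟨(fun x => s.1 x - (N.sequentialize D).pre t x + (N.sequentialize D).post t x, s.2),
      ⟨t, hl, ⟨enabled_sequentialize hD hs hen, fun _ => rfl⟩, rfl⟩,
      Prod.ext (funext fun p => (hM p).symm) hU.symm⟩

theorem isStrongBisim_sequentialize (hD : N.ConcurrentApart D) :
    LTS.IsStrongBisim (N.sequentialize D).stLTS N.stLTS
      fun s1 s2 => (N.sequentialize D).STConsistent s1 ∧ s2 = forgetLocations s1 := by
  refine ⟨⟨STConsistent.init, rfl⟩, fun s1 _ _ s1' ⟨hs, hs2⟩ h => ?_,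
    fun s1 _ _ s2' ⟨hs, hs2⟩ h => ?_⟩
  · exact ⟨_, hs2 ▸ stTr_of_sequentialize h, hs.stTr h, rfl⟩
  · subst hs2
    obtain ⟨s1', h1, rfl⟩ := exists_stTr_sequentialize hD hs h
    exact ⟨s1', h1, hs.stTr h1, rfl⟩

def locIn (N : PNet P Tr A) (D : P ⊕ Tr → Loc) (k : Loc) : Set (P ⊕ Loc) :=
  Sum.inl '' {p | p ∈ N.places ∧ D (.inl p) = k}

def locOut (N : PNet P Tr A) (D : P ⊕ Tr → Loc) (k : Loc) : Set (P ⊕ Loc) :=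
  Sum.inl '' {p | D (.inl p) ≠ k ∧ ∃ t, D (.inr t) = k ∧ N.post t p ≠ 0}

def locPlaces (N : PNet P Tr A) (D : P ⊕ Tr → Loc) (k : Loc) : Set (P ⊕ Loc) :=
  N.locIn D k ∪ N.locOut D k ∪ {.inr k}

noncomputable def locM0 (N : PNet P Tr A) (D : P ⊕ Tr → Loc) (k : Loc) (x : P ⊕ Loc) : ℕ :=
  if Sum.elim (D ∘ .inl) id x = k then (N.sequentialize D).M0 x else 0

theorem inr_notMem_locIn_union_locOut (k l : Loc) :
    Sum.inr l ∉ N.locIn D k ∪ N.locOut D k := by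
  simp [locIn, locOut]

theorem mem_locPlaces_of_pre_ne_zero (hD : N.PreplacesColocated D) {t : Tr} {x : P ⊕ Loc}
    (h : (N.sequentialize D).pre t x ≠ 0) : x ∈ N.locPlaces D (D (.inr t)) := by
  rcases x with p | l
  · exact .inl (.inl ⟨p, ⟨(N.pre_wf t p h).2, (hD t p h).symm⟩, rfl⟩)
  · exact .inr (congrArg Sum.inr (locArc_ne_zero.mp h).2.symm)

theorem mem_locPlaces_of_post_ne_zero {t : Tr} {x : P ⊕ Loc}
    (h : (N.sequentialize D).post t x ≠ 0) : x ∈ N.locPlaces D (D (.inr t)) := by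
  rcases x with p | l
  · by_cases hp : D (.inl p) = D (.inr t)
    · exact .inl (.inl ⟨p, ⟨(N.post_wf t p h).2, hp⟩, rfl⟩)
    · exact .inl (.inr ⟨p, ⟨hp, t, rfl, h⟩, rfl⟩)
  · exact .inr (congrArg Sum.inr (locArc_ne_zero.mp h).2.symm)

theorem mem_locPlaces_of_locM0_ne_zero {k : Loc} {x : P ⊕ Loc} (h : N.locM0 D k x ≠ 0) :
    x ∈ N.locPlaces D k := by
  have hk : Sum.elim (D ∘ .inl) id x = k := by_contra fun hk => h (if_neg hk)
  rw [locM0, if_pos hk] at h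
  rcases x with p | l
  · exact .inl (.inl ⟨p, ⟨N.M0_wf p h, hk⟩, rfl⟩)
  · exact .inr (congrArg Sum.inr hk)

theorem finsum_locM0 (x : P ⊕ Loc) : ∑ᶠ k, N.locM0 D k x = (N.sequentialize D).M0 x :=
  (finsum_eq_single _ _ fun _ hk => if_neg (Ne.symm hk)).trans (if_pos rfl)

noncomputable def locComponent (N : PNet P Tr A) (D : P ⊕ Tr → Loc)
    (hD : N.PreplacesColocated D) (k : Loc) : NetComponent (P ⊕ Loc) Tr A where
  net := (N.sequentialize D).restrict (N.locPlaces D k) {t | D (.inr t) = k} (N.locM0 D k)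
    (by rintro t rfl x; exact mem_locPlaces_of_pre_ne_zero hD)
    (by rintro t rfl x; exact mem_locPlaces_of_post_ne_zero)
    (fun _ => mem_locPlaces_of_locM0_ne_zero)
  I := N.locIn D k
  O := N.locOut D k
  I_sub _ hx := .inl (.inl hx)
  O_sub _ hx := .inl (.inr hx)
  disjIO := by
    rw [Set.disjoint_left]
    rintro _ ⟨p, ⟨-, hk⟩, rfl⟩ ⟨p', ⟨hk', -⟩, hpp'⟩
    cases hpp'
    exact hk' hk
  O_noPost := by
    rintro _ ⟨p, ⟨hk, -⟩, rfl⟩ t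
    show (if D (.inr t) = k then N.pre t p else 0) = 0
    split_ifs with ht
    · by_contra h
      exact hk (by rw [← hD t p h, ht])
    · rfl

noncomputable def locComposite (N : PNet P Tr A) (D : P ⊕ Tr → Loc) :
    NetComponent (P ⊕ Loc) Tr A where
  net := N.sequentialize D
  I := ⋃ k, N.locIn D k
  O := (⋃ k, N.locOut D k) \ ⋃ k, N.locIn D k
  I_sub := by
    rintro _ ⟨_, ⟨k, rfl⟩, p, ⟨hp, -⟩, rfl⟩
    exact .inl ⟨p, hp, rfl⟩
  O_sub := by
    rintro _ ⟨⟨_, ⟨k, rfl⟩, p, ⟨-, t, -, hpost⟩, rfl⟩, -⟩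
    exact .inl ⟨p, (N.post_wf t p hpost).2, rfl⟩
  disjIO := disjoint_sdiff_self_right
  O_noPost := by
    rintro _ ⟨⟨_, ⟨k, rfl⟩, p, ⟨-, t, -, hpost⟩, rfl⟩, hnotIn⟩
    exact (hnotIn (Set.mem_iUnion.mpr ⟨_, p, ⟨(N.post_wf t p hpost).2, rfl⟩, rfl⟩)).elim

theorem locComponent_sequential (hD : N.PreplacesColocated D) (k : Loc) :
    (N.locComponent D hD k).Sequential := by
  refine ⟨{.inr k}, ?_, fun t ⟨htk, ht⟩ => ?_,
    ⟨_, rfl, if_pos rfl, fun _ h hne => absurd h hne⟩⟩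
  · rintro _ rfl
    exact ⟨.inr rfl, inr_notMem_locIn_union_locOut k k⟩
  · have : (N.locComponent D hD k).net.pre t (.inr k) = 1 ∧
        (N.locComponent D hD k).net.post t (.inr k) = 1 := by
      simp_all [locComponent, restrict, sequentialize, locArc]
    exact ⟨⟨_, rfl, this.1, fun _ h hne => absurd h hne⟩,
      ⟨_, rfl, this.2, fun _ h hne => absurd h hne⟩⟩

theorem composable_locComponent (hD : N.PreplacesColocated D) :
    Composable (N.locComponent D hD) := by
  refine ⟨fun k l hkl => ?_, fun k l hkl => ?_, fun k l hkl => ?_⟩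
  · rw [Set.disjoint_left]
    rintro t ⟨hk, -⟩ ⟨hl, -⟩
    exact hkl (hk.symm.trans hl)
  · ext x
    simp only [locComponent, restrict, locPlaces, Set.mem_inter_iff, Set.mem_union,
      Set.mem_singleton_iff]
    constructor
    · rintro ⟨hk | hk, hl | hl⟩
      · exact ⟨hk, hl⟩
      · exact absurd (hl ▸ hk) (inr_notMem_locIn_union_locOut k l)
      · exact absurd (hk ▸ hl) (inr_notMem_locIn_union_locOut l k)
      · exact absurd (Sum.inr_injective (hk.symm.trans hl)) hkl
    · rintro ⟨hk, hl⟩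
      exact ⟨.inl hk, .inl hl⟩
  · rw [Set.disjoint_left]
    rintro _ ⟨p, ⟨-, hk⟩, rfl⟩ ⟨p', ⟨-, hl⟩, hpp'⟩
    cases hpp'
    exact hkl (hk.symm.trans hl)

theorem isParComp_locComponent (hD : N.PreplacesColocated D) :
    IsParComp (N.locComponent D hD) (N.locComposite D) where
  places_eq := by
    ext x
    simp only [Set.mem_iUnion]
    constructor
    · rintro (⟨p, hp, rfl⟩ | ⟨k, rfl⟩)
      · exact ⟨_, .inl (.inl ⟨p, ⟨hp, rfl⟩, rfl⟩)⟩
      · exact ⟨k, .inr rfl⟩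
    · rintro ⟨k, (⟨p, ⟨hp, -⟩, rfl⟩ | ⟨p, ⟨-, t, -, hpost⟩, rfl⟩) | rfl⟩
      · exact .inl ⟨p, hp, rfl⟩
      · exact .inl ⟨p, (N.post_wf t p hpost).2, rfl⟩
      · exact .inr ⟨k, rfl⟩
  trans_eq := by
    ext t
    simp only [Set.mem_iUnion]
    exact ⟨fun ht => ⟨_, rfl, ht⟩, fun ⟨_, _, ht⟩ => ht⟩
  pre_eq _ _ ht _ := (if_pos ht.1).symm
  post_eq _ _ ht _ := (if_pos ht.1).symm
  M0_eq x := (finsum_locM0 x).symm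
  l_eq _ _ _ := rfl
  I_eq := rfl
  O_eq := rfl

theorem isLSGA_sequentialize (hD : N.PreplacesColocated D) : IsLSGA (N.sequentialize D) :=
  ⟨_, _, _, composable_locComponent hD, locComponent_sequential hD,
    isParComp_locComponent hD, rfl⟩

end Sequentialize

end PNet

/-- for any distributed net `N` there is an LSGA net `N'` with
`N' ≈Δ_bSTb N`. -/
theorem distributed_to_LSGA {P Tr A : Type} (N : PNet P Tr A)
    (h : N.Distributed) :
    ∃ (P' Tr' : Type) (N' : PNet P' Tr' A),
      IsLSGA N' ∧ BranchingSTBisimilarED N' N := by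
  obtain ⟨Loc, D, hcoloc, hapart⟩ := h
  exact ⟨P ⊕ Loc, Tr, N.sequentialize D, PNet.isLSGA_sequentialize hcoloc,
    (PNet.isStrongBisim_sequentialize hapart).branchingBisimilarED⟩
end

section
/- For any essentially distributed Petri net N there is a distributed Petri net N′ such that N′ and N are branching ST-bisimilar with explicit divergence (N′ ≈Δ_bSTb N). -/
open scoped Classical

section AugAux

variable {P Tr A Loc : Type}

/-- Indicator arc weight for the scheduler place of location `l`. -/
noncomputable def augInd (N : PNet P Tr A) (D : P ⊕ Tr → Loc) (t : Tr) (l : Loc) : ℕ :=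
  if N.l t = none ∧ t ∈ N.trans ∧ D (Sum.inr t) = l then 1 else 0

lemma augInd_le_one (N : PNet P Tr A) (D : P ⊕ Tr → Loc) (t : Tr) (l : Loc) :
    augInd N D t l ≤ 1 := by
  unfold augInd; split <;> simp

lemma augInd_vis (N : PNet P Tr A) (D : P ⊕ Tr → Loc) {t : Tr} {a : A}
    (h : N.l t = some a) (l : Loc) : augInd N D t l = 0 := by
  simp [augInd, h]

/-- The augmented net: one fresh mutual-exclusion place per location, consumed and
restored by every τ-transition of that location. -/
noncomputable def PNet.aug (N : PNet P Tr A) (D : P ⊕ Tr → Loc) : PNet (P ⊕ Loc) Tr A where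
  places := Sum.inl '' N.places ∪ Set.range Sum.inr
  trans := N.trans
  pre t x := Sum.elim (fun p => N.pre t p) (fun l => augInd N D t l) x
  post t x := Sum.elim (fun p => N.post t p) (fun l => augInd N D t l) x
  M0 x := Sum.elim (fun p => N.M0 p) (fun _ => 1) x
  l := N.l
  pre_wf := by
    rintro t (p | l) hx
    · exact ⟨(N.pre_wf t p hx).1, Or.inl ⟨p, (N.pre_wf t p hx).2, rfl⟩⟩
    · simp only [Sum.elim_inr, augInd] at hx
      split at hx
      next hc => exact ⟨hc.2.1, Or.inr ⟨l, rfl⟩⟩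
      next => exact absurd rfl hx
  post_wf := by
    rintro t (p | l) hx
    · exact ⟨(N.post_wf t p hx).1, Or.inl ⟨p, (N.post_wf t p hx).2, rfl⟩⟩
    · simp only [Sum.elim_inr, augInd] at hx
      split at hx
      next hc => exact ⟨hc.2.1, Or.inr ⟨l, rfl⟩⟩
      next => exact absurd rfl hx
  M0_wf := by
    rintro (p | l) hx
    · exact Or.inl ⟨p, N.M0_wf p hx, rfl⟩
    · exact Or.inr ⟨l, rfl⟩

variable (N : PNet P Tr A) (D : P ⊕ Tr → Loc)

lemma aug_preStep_inl (G : Tr →₀ ℕ) (p : P) :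
    (N.aug D).preStep G (Sum.inl p) = N.preStep G p := rfl

lemma aug_postStep_inl (G : Tr →₀ ℕ) (p : P) :
    (N.aug D).postStep G (Sum.inl p) = N.postStep G p := rfl

lemma aug_pre_eq_post_inr (t : Tr) (l : Loc) :
    (N.aug D).pre t (Sum.inr l) = (N.aug D).post t (Sum.inr l) := rfl

lemma aug_pre_inr_le (t : Tr) (l : Loc) : (N.aug D).pre t (Sum.inr l) ≤ 1 :=
  augInd_le_one N D t l

lemma aug_reach {M' : P ⊕ Loc → ℕ} (h : (N.aug D).Reachable M') :
    N.Reachable (fun p => M' (Sum.inl p)) ∧ ∀ l, M' (Sum.inr l) = 1 := by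
  induction h with
  | refl => exact ⟨PNet.Reachable.refl, fun l => rfl⟩
  | @step M G M' hr hs ih =>
    obtain ⟨hne, hsub, hle, heq⟩ := hs
    refine ⟨ih.1.step ⟨hne, hsub, fun p => hle (Sum.inl p), fun p => heq (Sum.inl p)⟩, ?_⟩
    intro l
    have hpp : (N.aug D).preStep G (Sum.inr l) = (N.aug D).postStep G (Sum.inr l) := rfl
    rw [heq (Sum.inr l), ← hpp, Nat.sub_add_cancel (hle _), ih.2 l]

lemma aug_distributed (hD : N.EssentiallyDistributedWrt D) : (N.aug D).Distributed := by
  refine ⟨Loc, fun x => Sum.elim (Sum.elim (fun p => D (Sum.inl p)) id) (fun t => D (Sum.inr t)) x,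
    ?_, ?_⟩
  · rintro t (p | l) hx
    · exact hD.1 t p hx
    · simp only [Sum.elim_inr, Sum.elim_inl]
      simp only [PNet.aug, Sum.elim_inr, augInd] at hx
      split at hx
      next hc => exact hc.2.2
      next => exact absurd rfl hx
  · rintro t u ⟨ht, hu, M, hM, hle⟩ hEq
    simp only [Sum.elim_inr] at hEq
    have hres := aug_reach N D hM
    by_cases hlt : N.l t = none
    · by_cases hlu : N.l u = none
      · -- both τ at the same location: scheduler place is overbooked
        have ht' : t ∈ N.trans := ht
        have hu' : u ∈ N.trans := hu
        have h1 : (N.aug D).pre t (Sum.inr (D (Sum.inr t))) = 1 := by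
          show augInd N D t (D (Sum.inr t)) = 1
          unfold augInd
          rw [if_pos ⟨hlt, ht', rfl⟩]
        have h2 : (N.aug D).pre u (Sum.inr (D (Sum.inr t))) = 1 := by
          show augInd N D u (D (Sum.inr t)) = 1
          unfold augInd
          rw [if_pos ⟨hlu, hu', hEq.symm⟩]
        have := hle (Sum.inr (D (Sum.inr t)))
        rw [h1, h2, hres.2] at this
        omega
      · -- u visible: essential distribution applies to (u, t)
        exact hD.2 u t ⟨hu, ht, fun p => M (Sum.inl p), hres.1,
          fun p => by rw [Nat.add_comm]; exact hle (Sum.inl p)⟩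
          hlu hEq.symm
    · exact hD.2 t u ⟨ht, hu, fun p => M (Sum.inl p), hres.1,
        fun p => hle (Sum.inl p)⟩ hlt hEq

lemma one_sub_add_self {e : ℕ} (he : e ≤ 1) : 1 - e + e = 1 := by omega

/-- The bisimulation between the ST-markings of `N.aug D` and those of `N`. -/
def augB (_N : PNet P Tr A) (_D : P ⊕ Tr → Loc) :
    ((P ⊕ Loc → ℕ) × List Tr) → ((P → ℕ) × List Tr) → Prop :=
  fun s1 s2 => (∀ p, s1.1 (Sum.inl p) = s2.1 p) ∧ (∀ l, s1.1 (Sum.inr l) = 1) ∧ s1.2 = s2.2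

lemma aug_bisim : IsBranchingBisim (N.aug D).stLTS N.stLTS (augB N D) := by
  constructor
  · exact ⟨fun p => rfl, fun l => rfl, rfl⟩
  constructor
  · -- forward: steps of the augmented net are matched by `N`
    rintro s1 s2 (_ | (a | ⟨a, n⟩)) s1' ⟨hBm, hBi, hBU⟩ htr
    · obtain ⟨t, hlt, ⟨⟨ht, hen⟩, heq⟩, h2⟩ := htr
      refine ⟨s2, (fun p => s2.1 p - N.pre t p + N.post t p, s2.2), Relation.ReflTransGen.refl,
        Or.inl ⟨t, hlt, ⟨⟨ht, fun p => by rw [← hBm p]; exact hen (Sum.inl p)⟩,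
          fun p => rfl⟩, rfl⟩, ⟨hBm, hBi, hBU⟩, ?_⟩
      refine ⟨fun p => by rw [heq (Sum.inl p), hBm p]; rfl, fun l => ?_, h2 ▸ hBU⟩
      rw [heq (Sum.inr l), hBi l, ← aug_pre_eq_post_inr,
        one_sub_add_self (aug_pre_inr_le N D t l)]
    · obtain ⟨t, hlt, ⟨ht, hen⟩, heq, h2⟩ := htr
      refine ⟨s2, (fun p => s2.1 p - N.pre t p, s2.2 ++ [t]), Relation.ReflTransGen.refl,
        Or.inl ⟨t, hlt, ⟨ht, fun p => by rw [← hBm p]; exact hen (Sum.inl p)⟩,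
          fun p => rfl, rfl⟩, ⟨hBm, hBi, hBU⟩, ?_⟩
      refine ⟨fun p => by rw [heq (Sum.inl p), hBm p]; rfl, fun l => ?_, by rw [h2, hBU]⟩
      rw [heq (Sum.inr l)]
      change s1.1 (Sum.inr l) - augInd N D t l = 1
      rw [hBi l, augInd_vis N D hlt l]
    · obtain ⟨t, hidx, hlt, h2, heq⟩ := htr
      refine ⟨s2, (fun p => s2.1 p + N.post t p, s2.2.eraseIdx n), Relation.ReflTransGen.refl,
        Or.inl ⟨t, by rw [← hBU]; exact hidx, hlt, rfl, fun p => rfl⟩, ⟨hBm, hBi, hBU⟩, ?_⟩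
      refine ⟨fun p => by rw [heq (Sum.inl p), hBm p]; rfl, fun l => ?_, by rw [h2, hBU]⟩
      rw [heq (Sum.inr l)]
      change s1.1 (Sum.inr l) + augInd N D t l = 1
      rw [hBi l, augInd_vis N D hlt l]
  · -- backward: steps of `N` are matched by the augmented net
    rintro s1 s2 (_ | (a | ⟨a, n⟩)) s2' ⟨hBm, hBi, hBU⟩ htr
    · obtain ⟨t, hlt, ⟨⟨ht, hen⟩, heq⟩, h2⟩ := htr
      refine ⟨s1, (Sum.elim (fun p => s2'.1 p) (fun _ => 1), s1.2), Relation.ReflTransGen.refl,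
        Or.inl ⟨t, hlt, ⟨⟨ht, ?_⟩, ?_⟩, rfl⟩, ⟨hBm, hBi, hBU⟩,
        fun p => rfl, fun l => rfl, by rw [hBU, h2]⟩
      · rintro (p | l)
        · rw [hBm p]; exact hen p
        · rw [hBi l]; exact aug_pre_inr_le N D t l
      · rintro (p | l)
        · simp only [Sum.elim_inl]; rw [heq p, hBm p]; rfl
        · simp only [Sum.elim_inr]
          rw [hBi l, ← aug_pre_eq_post_inr]
          exact (one_sub_add_self (aug_pre_inr_le N D t l)).symm
    · obtain ⟨t, hlt, ⟨ht, hen⟩, heq, h2⟩ := htr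
      refine ⟨s1, (Sum.elim (fun p => s2'.1 p) (fun _ => 1), s1.2 ++ [t]),
        Relation.ReflTransGen.refl,
        Or.inl ⟨t, hlt, ⟨ht, ?_⟩, ?_, rfl⟩, ⟨hBm, hBi, hBU⟩,
        fun p => rfl, fun l => rfl, by rw [hBU, h2]⟩
      · rintro (p | l)
        · rw [hBm p]; exact hen p
        · rw [hBi l]; exact aug_pre_inr_le N D t l
      · rintro (p | l)
        · simp only [Sum.elim_inl]; rw [heq p, hBm p]; rfl
        · simp only [Sum.elim_inr]
          change (1 : ℕ) = s1.1 (Sum.inr l) - augInd N D t l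
          rw [hBi l, augInd_vis N D hlt l]
    · obtain ⟨t, hidx, hlt, h2, heq⟩ := htr
      refine ⟨s1, (Sum.elim (fun p => s2'.1 p) (fun _ => 1), s1.2.eraseIdx n),
        Relation.ReflTransGen.refl,
        Or.inl ⟨t, by rw [hBU]; exact hidx, hlt, rfl, ?_⟩, ⟨hBm, hBi, hBU⟩,
        fun p => rfl, fun l => rfl, by rw [hBU, h2]⟩
      rintro (p | l)
      · simp only [Sum.elim_inl]; rw [heq p, hBm p]; rfl
      · simp only [Sum.elim_inr]
        change (1 : ℕ) = s1.1 (Sum.inr l) + augInd N D t l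
        rw [hBi l, augInd_vis N D hlt l]

lemma aug_div {s1 s2} (hB : augB N D s1 s2) :
    (N.aug D).stLTS.Diverges s1 ↔ N.stLTS.Diverges s2 := by
  obtain ⟨hBm, hBi, hBU⟩ := hB
  constructor
  · rintro ⟨f, hf0, hf⟩
    refine ⟨fun n => (fun p => (f n).1 (Sum.inl p), (f n).2), ?_, ?_⟩
    · show (fun p => (f 0).1 (Sum.inl p), (f 0).2) = s2
      rw [hf0]
      exact Prod.ext (funext fun p => hBm p) hBU
    · intro n
      obtain ⟨t, hlt, ⟨⟨ht, hen⟩, heq⟩, h2⟩ := hf n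
      exact ⟨t, hlt, ⟨⟨ht, fun p => hen (Sum.inl p)⟩, fun p => heq (Sum.inl p)⟩, h2⟩
  · rintro ⟨g, hg0, hg⟩
    refine ⟨fun n => (Sum.elim (g n).1 (fun _ => 1), (g n).2), ?_, ?_⟩
    · show (Sum.elim (g 0).1 (fun _ => 1), (g 0).2) = s1
      rw [hg0]
      refine (Prod.ext (funext ?_) hBU.symm)
      rintro (p | l)
      · exact (hBm p).symm
      · exact (hBi l).symm
    · intro n
      obtain ⟨t, hlt, ⟨⟨ht, hen⟩, heq⟩, h2⟩ := hg n
      refine ⟨t, hlt, ⟨⟨ht, ?_⟩, ?_⟩, h2⟩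
      · rintro (p | l)
        · exact hen p
        · exact aug_pre_inr_le N D t l
      · rintro (p | l)
        · simp only [Sum.elim_inl]; rw [heq p]; rfl
        · simp only [Sum.elim_inr]
          rw [← aug_pre_eq_post_inr]
          exact (one_sub_add_self (aug_pre_inr_le N D t l)).symm

end AugAux

/-- for any essentially distributed net `N` there is a distributed
net `N'` with `N' ≈Δ_bSTb N`. -/
theorem essentially_distributed_to_distributed {P Tr A : Type} (N : PNet P Tr A)
    (h : N.EssentiallyDistributed) :
    ∃ (P' Tr' : Type) (N' : PNet P' Tr' A),
      N'.Distributed ∧ BranchingSTBisimilarED N' N := by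
  obtain ⟨Loc, D, hD⟩ := h
  exact ⟨P ⊕ Loc, Tr, N.aug D, aug_distributed N D hD,
    augB N D, aug_bisim N D, fun s1 s2 hB => aug_div N D hB⟩
end
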